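/- arXiv:1007.2152 — 9 statements merged into one kernel-verified Lean document; each statement's English description precedes it below -/
import Mathlib

section
/- Let M be a loopless uniformly dense matroid on a finite ground set E with |E| = n and rank r(E) = r ≥ 1, and let 1 ≤ j ≤ n. Among all injective sequences (x_1, …, x_j) of j distinct elements of E, the number of sequences in which x_j does not lie in the span of {x_1, …, x_{j−1}} is at least (1 − (j−1)/r) times the total number n·(n−1)⋯(n−j+1) of such sequences. (Equivalently: the probability that the j-th element of a uniformly random injective sequence is selected by the greedy procedure is at least 1 − (j−1)/r.) -/
/-- A matroid on a finite ground set `E`, given by its rank function `r`,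
where `r X` is the size of a largest independent subset of `X`. -/
structure FinMatroid (α : Type*) [DecidableEq α] where
  E : Finset α
  r : Finset α → ℕ
  r_empty : r ∅ = 0
  r_le_card : ∀ X : Finset α, r X ≤ X.card
  r_mono : ∀ ⦃X Y : Finset α⦄, X ⊆ Y → r X ≤ r Y
  r_submod : ∀ X Y : Finset α, r (X ∪ Y) + r (X ∩ Y) ≤ r X + r Y

/-- A matroid is loopless if every singleton of the ground set is independent. -/
def FinMatroid.Loopless {α : Type*} [DecidableEq α] (M : FinMatroid α) : Prop :=
  ∀ e ∈ M.E, M.r {e} = 1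

/-- A matroid is uniformly dense if `|X| · r(E) ≤ |E| · r(X)` for every `X ⊆ E`. -/
def FinMatroid.UniformlyDense {α : Type*} [DecidableEq α] (M : FinMatroid α) : Prop :=
  ∀ X ⊆ M.E, X.card * M.r M.E ≤ M.E.card * M.r X

lemma FinMatroid.r_union_eq {α : Type*} [DecidableEq α] (M : FinMatroid α)
    (A : Finset α) : ∀ B : Finset α, (∀ e ∈ B, M.r (insert e A) = M.r A) →
    M.r (A ∪ B) = M.r A := by
  intro B
  induction B using Finset.induction_on with
  | empty => simp
  | @insert e B' hnot ih =>
    intro h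
    have hB' := ih (fun e he => h e (Finset.mem_insert_of_mem he))
    have he := h e (Finset.mem_insert_self _ _)
    have hsub := M.r_submod (A ∪ B') (insert e A)
    have h1 : (A ∪ B') ∪ insert e A = A ∪ insert e B' := by
      ext a
      simp only [Finset.mem_union, Finset.mem_insert]
      tauto
    have h2 : A ⊆ (A ∪ B') ∩ insert e A := by
      intro a ha
      simp only [Finset.mem_inter, Finset.mem_union, Finset.mem_insert]
      tauto
    have h3 := M.r_mono h2
    have h5 : M.r A ≤ M.r (A ∪ insert e B') := M.r_mono Finset.subset_union_left
    rw [h1] at hsub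
    omega

/-- Among all injective sequences `(x_1, …, x_j)` of `j` distinct elements of a loopless
uniformly dense matroid of rank `r ≥ 1`, the number of sequences in which `x_j` lies
outside the span of `{x_1, …, x_{j−1}}` (i.e. `x_j` is selected by the greedy procedure)
is at least `(1 − (j−1)/r)` times the total number of such sequences. -/
theorem stmt1 {α : Type*} [DecidableEq α] (M : FinMatroid α)
    (hloop : M.Loopless) (hud : M.UniformlyDense) (hrank : 1 ≤ M.r M.E)
    (j : ℕ) (hj : 1 ≤ j) (hjn : j ≤ M.E.card) :
    (1 - ((j : ℝ) - 1) / (M.r M.E : ℝ)) *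
        ((Finset.univ.filter
            (fun x : Fin j → {a // a ∈ M.E} => Function.Injective x)).card : ℝ) ≤
      (((Finset.univ.filter
            (fun x : Fin j → {a // a ∈ M.E} => Function.Injective x)).filter
          (fun x =>
            M.r (insert ((x ⟨j - 1, by omega⟩ : {a // a ∈ M.E}) : α)
                ((Finset.univ.filter (fun i : Fin j => (i : ℕ) < j - 1)).image
                  (fun i => ((x i : {a // a ∈ M.E}) : α)))) ≠
              M.r ((Finset.univ.filter (fun i : Fin j => (i : ℕ) < j - 1)).image
                  (fun i => ((x i : {a // a ∈ M.E}) : α))))).card : ℝ) := by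
  have hrpos : (0 : ℝ) < (M.r M.E : ℝ) := by exact_mod_cast hrank
  by_cases hcase : ((j : ℝ) - 1) ≤ (M.r M.E : ℝ)
  · -- main case
    have hk1 : j - 1 ≤ j := Nat.sub_le j 1
    have hkr : j - 1 ≤ M.r M.E := by
      have : ((j - 1 : ℕ) : ℝ) ≤ (M.r M.E : ℝ) := by
        rw [Nat.cast_sub hj]; exact_mod_cast hcase
      exact_mod_cast this
    have hcnn : (0 : ℝ) ≤ 1 - ((j : ℝ) - 1) / (M.r M.E : ℝ) := by
      rw [sub_nonneg, div_le_one hrpos]; exact_mod_cast hcase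
    have h1 := Finset.card_eq_sum_card_fiberwise
      (s := Finset.univ.filter (fun x : Fin j → {a // a ∈ M.E} => Function.Injective x))
      (t := (Finset.univ : Finset (Fin (j-1) → {a // a ∈ M.E})))
      (f := fun x => fun i : Fin (j-1) => x (Fin.castLE hk1 i))
      (fun x _ => Finset.mem_univ _)
    have h2 := Finset.card_eq_sum_card_fiberwise
      (s := (Finset.univ.filter
            (fun x : Fin j → {a // a ∈ M.E} => Function.Injective x)).filter
          (fun x =>
            M.r (insert ((x ⟨j - 1, Nat.sub_lt hj Nat.one_pos⟩ : {a // a ∈ M.E}) : α)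
                ((Finset.univ.filter (fun i : Fin j => (i : ℕ) < j - 1)).image
                  (fun i => ((x i : {a // a ∈ M.E}) : α)))) ≠
              M.r ((Finset.univ.filter (fun i : Fin j => (i : ℕ) < j - 1)).image
                  (fun i => ((x i : {a // a ∈ M.E}) : α)))))
      (t := (Finset.univ : Finset (Fin (j-1) → {a // a ∈ M.E})))
      (f := fun x => fun i : Fin (j-1) => x (Fin.castLE hk1 i))
      (fun x _ => Finset.mem_univ _)
    rw [h1, h2]
    clear h1 h2
    push_cast
    rw [Finset.mul_sum]
    apply Finset.sum_le_sum
    intro p _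
    -- per-fiber inequality
    by_cases hp : Function.Injective p
    · -- p injective: main counting argument
      have hL : ∀ (i : Fin (j-1)), Fin.castLE hk1 i ≠ (⟨j - 1, Nat.sub_lt hj Nat.one_pos⟩ : Fin j) := by
        intro i hEq
        have hv := congrArg Fin.val hEq
        simp only [Fin.coe_castLE] at hv
        have := i.isLt
        omega
      set A : Finset α := Finset.univ.image (fun i : Fin (j-1) => ((p i : α))) with hA
      have hfilter : Finset.univ.filter (fun i : Fin j => (i : ℕ) < j - 1)
          = Finset.univ.image (Fin.castLE hk1) := by
        ext i
        simp only [Finset.mem_filter, Finset.mem_image, Finset.mem_univ, true_and]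
        constructor
        · intro h
          exact ⟨⟨i, h⟩, Fin.ext rfl⟩
        · rintro ⟨i', rfl⟩
          simpa using i'.isLt
      have himg : ∀ x : Fin j → {a // a ∈ M.E},
          (fun i : Fin (j-1) => x (Fin.castLE hk1 i)) = p →
          (Finset.univ.filter (fun i : Fin j => (i : ℕ) < j - 1)).image
            (fun i => ((x i : α))) = A := by
        intro x hx
        rw [hfilter, Finset.image_image, hA]
        congr 1
        funext i'
        exact congrArg Subtype.val (congrFun hx i')
      set g : {a // a ∈ M.E} → Fin j → {a // a ∈ M.E} :=
        fun e i => if h : (i : ℕ) < j - 1 then p ⟨i, h⟩ else e with hg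
      have hgf : ∀ e, (fun i : Fin (j-1) => g e (Fin.castLE hk1 i)) = p := by
        intro e
        funext i
        simp only [hg]
        rw [dif_pos (show ((Fin.castLE hk1 i : Fin j) : ℕ) < j - 1 by simpa using i.isLt)]
        exact congrArg p (Fin.ext rfl)
      have hgL : ∀ e, g e (⟨j - 1, Nat.sub_lt hj Nat.one_pos⟩ : Fin j) = e := by
        intro e
        simp only [hg]
        exact dif_neg (Nat.lt_irrefl _)
      have hginj : ∀ e : {a // a ∈ M.E}, (∀ i, p i ≠ e) → Function.Injective (g e) := by
        intro e he i1 i2 h12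
        simp only [hg] at h12
        by_cases c1 : (i1 : ℕ) < j - 1 <;> by_cases c2 : (i2 : ℕ) < j - 1
        · rw [dif_pos c1, dif_pos c2] at h12
          have hq := hp h12
          have hv : (i1 : ℕ) = (i2 : ℕ) := by
            have := congrArg Fin.val hq
            simpa using this
          exact Fin.ext hv
        · rw [dif_pos c1, dif_neg c2] at h12
          exact absurd h12 (he _)
        · rw [dif_neg c1, dif_pos c2] at h12
          exact absurd h12.symm (he _)
        · have t1 := i1.isLt
          have t2 := i2.isLt
          exact Fin.ext (by omega)
      have hnotmem : ∀ e : {a // a ∈ M.E}, M.r (insert (e : α) A) ≠ M.r A →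
          ∀ i, p i ≠ e := by
        intro e he i hi
        apply he
        have hmem : (e : α) ∈ A := by
          rw [hA]
          exact Finset.mem_image.2 ⟨i, Finset.mem_univ i, congrArg Subtype.val hi⟩
        rw [Finset.insert_eq_self.2 hmem]
      -- card of the total fiber
      have cardT : (Finset.filter
            (fun a : Fin j → {a // a ∈ M.E} => (fun i => a (Fin.castLE hk1 i)) = p)
            (Finset.filter (fun x => Function.Injective x) Finset.univ)).card
          = (Finset.univ.filter (fun e : {a // a ∈ M.E} => ∀ i, p i ≠ e)).card := by
        refine Finset.card_bij' (fun x _ => x (⟨j - 1, Nat.sub_lt hj Nat.one_pos⟩ : Fin j))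
          (fun e _ => g e) ?_ ?_ ?_ ?_
        · intro x hx
          simp only [Finset.mem_filter, Finset.mem_univ, true_and] at hx ⊢
          intro i hi
          have h1 := congrFun hx.2 i
          exact hL i (hx.1 (h1.trans hi))
        · intro e he
          simp only [Finset.mem_filter, Finset.mem_univ, true_and] at he ⊢
          exact ⟨hginj e he, hgf e⟩
        · intro x hx
          simp only [Finset.mem_filter, Finset.mem_univ, true_and] at hx
          funext i
          simp only [hg]
          by_cases c : (i : ℕ) < j - 1
          · rw [dif_pos c]
            have h1 := congrFun hx.2 ⟨(i : ℕ), c⟩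
            rw [← h1]
            exact congrArg x (Fin.ext rfl)
          · rw [dif_neg c]
            exact congrArg x
              (Fin.ext (Nat.le_antisymm (Nat.le_of_not_lt c) (Nat.le_pred_of_lt i.isLt)))
        · intro e _
          exact hgL e
      -- card of the good fiber
      have cardG : (Finset.filter
            (fun a : Fin j → {a // a ∈ M.E} => (fun i => a (Fin.castLE hk1 i)) = p)
            (Finset.filter
              (fun x : Fin j → {a // a ∈ M.E} =>
                M.r (insert ((x (⟨j - 1, Nat.sub_lt hj Nat.one_pos⟩ : Fin j) : {a // a ∈ M.E}) : α)
                    ((Finset.univ.filter (fun i : Fin j => (i : ℕ) < j - 1)).image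
                      (fun i => ((x i : {a // a ∈ M.E}) : α)))) ≠
                  M.r ((Finset.univ.filter (fun i : Fin j => (i : ℕ) < j - 1)).image
                      (fun i => ((x i : {a // a ∈ M.E}) : α))))
              (Finset.filter (fun x => Function.Injective x) Finset.univ))).card
          = (Finset.univ.filter
              (fun e : {a // a ∈ M.E} => M.r (insert (e : α) A) ≠ M.r A)).card := by
        refine Finset.card_bij' (fun x _ => x (⟨j - 1, Nat.sub_lt hj Nat.one_pos⟩ : Fin j))
          (fun e _ => g e) ?_ ?_ ?_ ?_
        · intro x hx
          simp only [Finset.mem_filter, Finset.mem_univ, true_and] at hx ⊢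
          obtain ⟨⟨hxinj, hxpred⟩, hxeq⟩ := hx
          rw [himg x hxeq] at hxpred
          exact hxpred
        · intro e he
          simp only [Finset.mem_filter, Finset.mem_univ, true_and] at he ⊢
          refine ⟨⟨hginj e (hnotmem e he), ?_⟩, hgf e⟩
          rw [himg (g e) (hgf e), hgL e]
          exact he
        · intro x hx
          simp only [Finset.mem_filter, Finset.mem_univ, true_and] at hx
          funext i
          simp only [hg]
          by_cases c : (i : ℕ) < j - 1
          · rw [dif_pos c]
            have h1 := congrFun hx.2 ⟨(i : ℕ), c⟩
            rw [← h1]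
            exact congrArg x (Fin.ext rfl)
          · rw [dif_neg c]
            exact congrArg x
              (Fin.ext (Nat.le_antisymm (Nat.le_of_not_lt c) (Nat.le_pred_of_lt i.isLt)))
        · intro e _
          exact hgL e
      -- counting the target sets
      have cardBT : (Finset.univ.filter (fun e : {a // a ∈ M.E} => ∀ i, p i ≠ e)).card
          = M.E.card - (j - 1) := by
        have hBT : (Finset.univ.filter (fun e : {a // a ∈ M.E} => ∀ i, p i ≠ e))
            = (Finset.univ.image p)ᶜ := by
          ext e
          simp [eq_comm]
        rw [hBT, Finset.card_compl, Finset.card_image_of_injective _ hp,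
          Finset.card_univ, Fintype.card_fin, Fintype.card_coe]
      set S : Finset α := M.E.filter (fun a => M.r (insert a A) = M.r A) with hS
      have cardS : (Finset.univ.filter
          (fun e : {a // a ∈ M.E} => M.r (insert (e : α) A) = M.r A)).card = S.card := by
        refine Finset.card_bij (fun e _ => (e : α)) ?_ ?_ ?_
        · intro e he
          simp only [Finset.mem_filter, Finset.mem_univ, true_and] at he
          rw [hS]
          exact Finset.mem_filter.2 ⟨e.2, he⟩
        · intro e1 _ e2 _ h
          exact Subtype.ext h
        · intro a ha
          rw [hS] at ha
          simp only [Finset.mem_filter] at ha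
          exact ⟨⟨a, ha.1⟩, by simp [ha.2], rfl⟩
      have cardBG : (Finset.univ.filter
          (fun e : {a // a ∈ M.E} => M.r (insert (e : α) A) ≠ M.r A)).card
          = M.E.card - S.card := by
        have hBG : (Finset.univ.filter
            (fun e : {a // a ∈ M.E} => M.r (insert (e : α) A) ≠ M.r A))
            = (Finset.univ.filter
              (fun e : {a // a ∈ M.E} => M.r (insert (e : α) A) = M.r A))ᶜ := by
          ext e
          simp
        rw [hBG, Finset.card_compl, cardS, Fintype.card_coe]
      -- matroid rank bounds
      have hArank : M.r A ≤ j - 1 := by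
        refine le_trans (M.r_le_card A) (le_trans Finset.card_image_le ?_)
        simp
      have hScov : M.r (A ∪ S) = M.r A :=
        M.r_union_eq A S (fun e he => (Finset.mem_filter.1 he).2)
      have hSrank : M.r S ≤ M.r A := hScov ▸ M.r_mono Finset.subset_union_right
      have hudS := hud S (Finset.filter_subset _ _)
      have hcount : S.card * M.r M.E ≤ M.E.card * (j - 1) :=
        le_trans hudS (Nat.mul_le_mul_left _ (le_trans hSrank hArank))
      have hScard : S.card ≤ M.E.card := Finset.card_le_card (Finset.filter_subset _ _)
      -- wrap up with real arithmetic
      rw [cardT, cardBT, cardG, cardBG]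
      have hjj : ((j : ℝ) - 1) = ((j - 1 : ℕ) : ℝ) := by
        rw [Nat.cast_sub hj, Nat.cast_one]
      rw [Nat.cast_sub (le_trans hk1 hjn : j - 1 ≤ M.E.card), Nat.cast_sub hScard, hjj]
      have hkrR : ((j - 1 : ℕ) : ℝ) ≤ (M.r M.E : ℝ) := by exact_mod_cast hkr
      have hd1 : ((j - 1 : ℕ) : ℝ) / (M.r M.E : ℝ) ≤ 1 := (div_le_one hrpos).2 hkrR
      have hcountR : (S.card : ℝ) * (M.r M.E : ℝ) ≤ (M.E.card : ℝ) * ((j - 1 : ℕ) : ℝ) := by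
        exact_mod_cast hcount
      have hsn : (S.card : ℝ) ≤ ((j - 1 : ℕ) : ℝ) / (M.r M.E : ℝ) * (M.E.card : ℝ) := by
        rw [div_mul_eq_mul_div, le_div_iff₀ hrpos]
        linarith
      nlinarith [mul_nonneg (Nat.cast_nonneg (j - 1) : (0:ℝ) ≤ ((j-1:ℕ):ℝ))
        (sub_nonneg.2 hd1), hsn]
    · -- p not injective: fiber is empty
      have hempty : (Finset.filter
            (fun a : Fin j → {a // a ∈ M.E} => (fun i => a (Fin.castLE hk1 i)) = p)
            (Finset.filter (fun x => Function.Injective x) Finset.univ)) = ∅ := by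
        rw [Finset.filter_eq_empty_iff]
        intro x hx hxp
        simp only [Finset.mem_filter, Finset.mem_univ, true_and] at hx
        exact hp (by rw [← hxp]; exact hx.comp (Fin.castLE_injective hk1))
      rw [hempty]
      simp only [Finset.card_empty, Nat.cast_zero, mul_zero]
      positivity

  · -- trivial case: coefficient is nonpositive
    have h1 : 1 - ((j : ℝ) - 1) / (M.r M.E : ℝ) ≤ 0 := by
      rw [sub_nonpos, le_div_iff₀ hrpos]
      nlinarith [le_of_not_ge hcase]
    calc (1 - ((j : ℝ) - 1) / (M.r M.E : ℝ)) * _ ≤ 0 :=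
          mul_nonpos_of_nonpos_of_nonneg h1 (Nat.cast_nonneg _)
      _ ≤ _ := Nat.cast_nonneg _
end

section
/- Let M be a loopless matroid on a nonempty finite ground set E with rank function r. There exist an integer k ≥ 1, a chain of sets ∅ = F_0 ⊊ F_1 ⊊ ⋯ ⊊ F_k = E, and real numbers λ_1 > λ_2 > ⋯ > λ_k ≥ 1 such that: (1) for each 1 ≤ i ≤ k, F_{i−1} is the unique minimal minimizer and F_i is the unique maximal minimizer of the function f_{λ_i}(X) = λ_i · r(X) − |X| over all X ⊆ E; and (2) the values λ_1, …, λ_k are exactly the real numbers λ for which f_λ(X) = λ · r(X) − |X| admits more than one minimizer over subsets of E. -/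
/-- `A` is a minimizer of the set function `f_λ(X) = λ·r(X) − |X|` over subsets of `E`. -/
def IsMinimizer {α : Type*} [DecidableEq α] (M : FinMatroid α) (lam : ℝ) (A : Finset α) : Prop :=
  A ⊆ M.E ∧ ∀ X ⊆ M.E, lam * (M.r A : ℝ) - (A.card : ℝ) ≤ lam * (M.r X : ℝ) - (X.card : ℝ)

/-!
For `λ ≥ 0` the function `f_λ` is submodular, so its minimizers form a lattice with a least and
a greatest element, and comparing `f_λ` with `f_μ` shows that for `0 ≤ μ < λ` every minimizer at
`λ` lies inside every minimizer at `μ`. Between two consecutive critical values, the greatest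
minimizer at the upper one is the least minimizer at the lower one: otherwise bisecting at the
slope where both sets have the same value of `f` produces a critical value in between. The
critical values are finitely many such slopes, all in `[1, |E|]`; padding them with `|E| + 1`,
where looplessness makes `∅` the only minimizer, and `0`, where `E` is, the greatest minimizers
at the critical values form the chain.
-/

open Finset

theorem Finset.exists_antitone_enumeration {β : Type*} [LinearOrder β] (T : Finset β) {n : ℕ}
    (hT : #T = n + 1) :
    ∃ lam : ℕ → β, Antitone lam ∧ (∀ i < n, lam (i + 1) < lam i) ∧ (∀ i, lam i ∈ T) ∧
      ∀ x ∈ T, ∃ i ≤ n, x = lam i := by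
  set e := T.orderEmbOfFin hT
  refine ⟨fun i => e ⟨n - i, by omega⟩, fun i j hij => e.monotone (Fin.mk_le_mk.2 (by omega)),
    fun i hi => e.strictMono (Fin.mk_lt_mk.2 (by omega)), fun i => orderEmbOfFin_mem T hT _,
    fun x hx => ?_⟩
  obtain ⟨⟨m, hm⟩, rfl⟩ : x ∈ Set.range e := by rwa [range_orderEmbOfFin]
  exact ⟨n - m, by omega, congrArg e (Fin.ext (by simp; omega))⟩

theorem Finset.exists_antitone_enumeration_between {β : Type*} [LinearOrder β] (S : Finset β)
    {a b : β} (hba : b < a) (hS : ∀ x ∈ S, b < x ∧ x < a) :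
    ∃ lam : ℕ → β, lam 0 = a ∧ lam (#S + 1) = b ∧ (∀ i, b ≤ lam i) ∧ Antitone lam ∧
      (∀ i ≤ #S, lam (i + 1) < lam i) ∧ ∀ x, x ∈ S ↔ ∃ i, 1 ≤ i ∧ i ≤ #S ∧ x = lam i := by
  set T := insert a (insert b S)
  have hbS : b ∉ S := fun h => (hS b h).1.false
  have haS : a ∉ insert b S := by
    simp only [mem_insert, not_or]; exact ⟨hba.ne', fun h => (hS a h).2.false⟩
  have hT : #T = #S + 1 + 1 := by simp [T, card_insert_of_notMem haS, card_insert_of_notMem hbS]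
  have hTba : ∀ y ∈ T, b ≤ y ∧ y ≤ a := by
    intro y hy
    rcases mem_insert.1 hy with rfl | hy
    · exact ⟨hba.le, le_rfl⟩
    rcases mem_insert.1 hy with rfl | hy
    · exact ⟨le_rfl, hba.le⟩
    exact ⟨(hS y hy).1.le, (hS y hy).2.le⟩
  obtain ⟨lam, hanti, hlt, hmemT, hsurj⟩ := T.exists_antitone_enumeration hT
  have hlam0 : lam 0 = a := by
    obtain ⟨j, -, hj⟩ := hsurj a (mem_insert_self _ _)
    exact le_antisymm (hTba _ (hmemT 0)).2 (hj ▸ hanti (Nat.zero_le j))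
  have hlamk : lam (#S + 1) = b := by
    obtain ⟨j, hj, hjb⟩ := hsurj b (mem_insert_of_mem (mem_insert_self _ _))
    exact le_antisymm (hjb ▸ hanti hj) (hTba _ (hmemT _)).1
  refine ⟨lam, hlam0, hlamk, fun i => (hTba _ (hmemT i)).1, hanti, fun i hi => hlt i (by omega),
    fun x => ⟨fun hx => ?_, ?_⟩⟩
  · obtain ⟨j, hj, rfl⟩ := hsurj x (mem_insert_of_mem (mem_insert_of_mem hx))
    refine ⟨j, Nat.one_le_iff_ne_zero.2 ?_, Nat.le_of_lt_succ (hj.lt_of_ne ?_), rfl⟩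
    · rintro rfl; exact (hS _ hx).2.ne hlam0
    · rintro rfl; exact (hS _ hx).1.ne' hlamk
  · rintro ⟨i, hi1, hik, rfl⟩
    have hlt0 : lam i < a := hlam0 ▸ (hanti hi1).trans_lt (hlt 0 (by omega))
    have hgtk : b < lam i := hlamk ▸ (hanti (by omega : i + 1 ≤ #S + 1)).trans_lt (hlt i (by omega))
    simpa [T, hlt0.ne, hgtk.ne'] using hmemT i

namespace FinMatroid

variable {α : Type*} [DecidableEq α] (M : FinMatroid α)

def f (l : ℝ) (X : Finset α) : ℝ := l * M.r X - #X

@[simp]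
lemma f_empty (l : ℝ) : M.f l ∅ = 0 := by simp [f, M.r_empty]

lemma r_add_card_le_r_add_card {X Y : Finset α} (h : X ⊆ Y) : M.r Y + #X ≤ M.r X + #Y := by
  have hsub := M.r_submod X (Y \ X)
  rw [union_sdiff_of_subset h, inter_sdiff_self, M.r_empty] at hsub
  have := M.r_le_card (Y \ X)
  have := card_sdiff_add_card_eq_card h
  omega

lemma f_union_add_f_inter_le {l : ℝ} (hl : 0 ≤ l) (A B : Finset α) :
    M.f l (A ∪ B) + M.f l (A ∩ B) ≤ M.f l A + M.f l B := by
  have hr : (M.r (A ∪ B) : ℝ) + M.r (A ∩ B) ≤ M.r A + M.r B := by exact_mod_cast M.r_submod A B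
  have hcard : (#(A ∪ B) : ℝ) + #(A ∩ B) = #A + #B := by
    exact_mod_cast card_union_add_card_inter A B
  simp only [f]
  nlinarith [mul_le_mul_of_nonneg_left hr hl]

lemma f_sub_f (l m : ℝ) (X : Finset α) : M.f l X - M.f m X = (l - m) * M.r X := by
  simp only [f]; ring

lemma Loopless.one_le_r {M : FinMatroid α} (hloop : M.Loopless) {X : Finset α} (hX : X ⊆ M.E)
    (hne : X.Nonempty) : 1 ≤ M.r X := by
  obtain ⟨e, he⟩ := hne
  exact hloop e (hX he) ▸ M.r_mono (singleton_subset_iff.2 he)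

end FinMatroid

namespace IsMinimizer

variable {α : Type*} [DecidableEq α] {M : FinMatroid α} {l : ℝ} {A B : Finset α}

lemma f_le (hA : IsMinimizer M l A) {X : Finset α} (hX : X ⊆ M.E) : M.f l A ≤ M.f l X :=
  hA.2 X hX

lemma of_f_le (hA : IsMinimizer M l A) (hB : B ⊆ M.E) (h : M.f l B ≤ M.f l A) :
    IsMinimizer M l B :=
  ⟨hB, fun _ hX => h.trans (hA.f_le hX)⟩

lemma inter (hl : 0 ≤ l) (hA : IsMinimizer M l A) (hB : IsMinimizer M l B) :
    IsMinimizer M l (A ∩ B) := by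
  have hE : A ∩ B ⊆ M.E := inter_subset_left.trans hA.1
  refine hA.of_f_le hE ?_
  have := M.f_union_add_f_inter_le hl A B
  linarith [hB.f_le (union_subset hA.1 hB.1)]

lemma union (hl : 0 ≤ l) (hA : IsMinimizer M l A) (hB : IsMinimizer M l B) :
    IsMinimizer M l (A ∪ B) := by
  have hE : A ∪ B ⊆ M.E := union_subset hA.1 hB.1
  refine hA.of_f_le hE ?_
  have := M.f_union_add_f_inter_le hl A B
  linarith [hB.f_le (inter_subset_left.trans hA.1 : A ∩ B ⊆ M.E)]

lemma r_lt_of_ssubset (hA : IsMinimizer M l A) (hAB : A ⊂ B) (hB : B ⊆ M.E) : M.r A < M.r B := by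
  refine (M.r_mono hAB.subset).lt_of_ne fun hr => ?_
  have hcard : (#A : ℝ) < #B := by exact_mod_cast card_lt_card hAB
  have := hA.f_le hB
  simp only [FinMatroid.f, hr] at this
  linarith

lemma subset_of_lt {lam mu : ℝ} (hA : IsMinimizer M lam A) (hB : IsMinimizer M mu B) (hmu : 0 ≤ mu)
    (hlt : mu < lam) : A ⊆ B := by
  have hAB := hA.f_le (inter_subset_left.trans hA.1 : A ∩ B ⊆ M.E)
  have hmu_inter : M.f mu (A ∩ B) ≤ M.f mu A := by
    have := M.f_union_add_f_inter_le hmu A B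
    linarith [hB.f_le (union_subset hA.1 hB.1)]
  have hr : (M.r A : ℝ) ≤ M.r (A ∩ B) := by
    have := M.f_sub_f lam mu A
    have := M.f_sub_f lam mu (A ∩ B)
    exact le_of_mul_le_mul_left (by linarith) (sub_pos.2 hlt)
  have hcard : #A ≤ #(A ∩ B) := by
    have hr' : (M.r (A ∩ B) : ℝ) = M.r A :=
      le_antisymm (by exact_mod_cast M.r_mono inter_subset_left) hr
    simp only [FinMatroid.f, hr'] at hmu_inter
    exact_mod_cast (show (#A : ℝ) ≤ #(A ∩ B) by linarith)
  exact (eq_of_subset_of_card_le inter_subset_left hcard) ▸ inter_subset_right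

end IsMinimizer

namespace FinMatroid

variable {α : Type*} [DecidableEq α] (M : FinMatroid α) {l : ℝ}

lemma exists_isMinimizer (l : ℝ) : ∃ A, IsMinimizer M l A := by
  obtain ⟨A, hA, hmin⟩ := M.E.powerset.exists_min_image (M.f l) ⟨∅, empty_mem_powerset _⟩
  exact ⟨A, mem_powerset.1 hA, fun X hX => hmin X (mem_powerset.2 hX)⟩

lemma exists_isLeast_minimizers (hl : 0 ≤ l) : ∃ A, IsLeast {X | IsMinimizer M l X} A := by
  classical
  obtain ⟨A₀, hA₀⟩ := M.exists_isMinimizer l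
  have hne : (M.E.powerset.filter (IsMinimizer M l)).Nonempty :=
    ⟨A₀, mem_filter.2 ⟨mem_powerset.2 hA₀.1, hA₀⟩⟩
  exact ⟨_, inf'_induction hne id (fun _ hA _ hB => hA.inter hl hB) fun _ hX => (mem_filter.1 hX).2,
    fun X hX => inf'_le id (mem_filter.2 ⟨mem_powerset.2 hX.1, hX⟩)⟩

lemma exists_isGreatest_minimizers (hl : 0 ≤ l) : ∃ A, IsGreatest {X | IsMinimizer M l X} A := by
  classical
  obtain ⟨A₀, hA₀⟩ := M.exists_isMinimizer l
  have hne : (M.E.powerset.filter (IsMinimizer M l)).Nonempty :=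
    ⟨A₀, mem_filter.2 ⟨mem_powerset.2 hA₀.1, hA₀⟩⟩
  exact ⟨_, sup'_induction hne id (fun _ hA _ hB => hA.union hl hB) fun _ hX => (mem_filter.1 hX).2,
    fun X hX => le_sup' id (mem_filter.2 ⟨mem_powerset.2 hX.1, hX⟩)⟩

lemma minimizers_eq_singleton {A : Finset α} (hA : A ⊆ M.E)
    (hlt : ∀ X ⊆ M.E, X ≠ A → M.f l A < M.f l X) : {X | IsMinimizer M l X} = {A} := by
  ext X
  refine ⟨fun hX => by_contra fun hne => (hX.f_le hA).not_gt (hlt X hX.1 hne), ?_⟩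
  rintro rfl
  refine ⟨hA, fun Y hY => ?_⟩
  obtain rfl | hne := eq_or_ne Y X
  · exact le_rfl
  · exact (hlt Y hY hne).le

lemma minimizers_eq_ground_of_lt_one (hl : l < 1) : {X | IsMinimizer M l X} = {M.E} := by
  refine M.minimizers_eq_singleton subset_rfl fun X hX hne => ?_
  have hcard : (#X : ℝ) < #M.E := by exact_mod_cast card_lt_card (hX.ssubset_of_ne hne)
  have hrank : (M.r M.E : ℝ) + #X ≤ M.r X + #M.E := by exact_mod_cast M.r_add_card_le_r_add_card hX
  have hmono : (M.r X : ℝ) ≤ M.r M.E := by exact_mod_cast M.r_mono hX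
  have : l * ((M.r M.E : ℝ) - M.r X) < #M.E - #X := by
    rcases (sub_nonneg.2 hmono).eq_or_lt with h | h
    · rw [← h, mul_zero]; linarith
    · exact (mul_lt_of_lt_one_left h hl).trans_le (by linarith)
  simp only [f]
  linarith

lemma Loopless.minimizers_eq_empty {M : FinMatroid α} (hloop : M.Loopless) (hl : (#M.E : ℝ) < l) :
    {X | IsMinimizer M l X} = {∅} := by
  refine M.minimizers_eq_singleton (empty_subset _) fun X hX hne => ?_
  have hr : (1 : ℝ) ≤ M.r X := by exact_mod_cast hloop.one_le_r hX (nonempty_iff_ne_empty.2 hne)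
  have hcard : (#X : ℝ) ≤ #M.E := by exact_mod_cast card_le_card hX
  have hl0 : 0 ≤ l := (Nat.cast_nonneg _).trans hl.le
  rw [f_empty]
  simp only [f]
  nlinarith [mul_le_mul_of_nonneg_left hr hl0]

def IsCriticalValue (l : ℝ) : Prop :=
  ∃ X Y, IsMinimizer M l X ∧ IsMinimizer M l Y ∧ X ≠ Y

variable {M}

lemma not_isCriticalValue_of_minimizers_eq_singleton {A : Finset α}
    (h : {X | IsMinimizer M l X} = {A}) : ¬ M.IsCriticalValue l := by
  rintro ⟨X, Y, hX, hY, hne⟩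
  rw [Set.ext_iff] at h
  exact hne (((h X).1 hX).trans ((h Y).1 hY).symm)

lemma IsCriticalValue.one_le (hl : M.IsCriticalValue l) : 1 ≤ l :=
  le_of_not_gt fun h => not_isCriticalValue_of_minimizers_eq_singleton
    (M.minimizers_eq_ground_of_lt_one h) hl

lemma IsCriticalValue.le_card (hl : M.IsCriticalValue l) (hloop : M.Loopless) : l ≤ #M.E :=
  le_of_not_gt fun h => not_isCriticalValue_of_minimizers_eq_singleton
    (hloop.minimizers_eq_empty h) hl

lemma IsCriticalValue.ssubset (hl : M.IsCriticalValue l) {A B : Finset α}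
    (hA : IsLeast {X | IsMinimizer M l X} A) (hB : IsGreatest {X | IsMinimizer M l X} B) :
    A ⊂ B := by
  refine ssubset_of_subset_of_ne (hB.2 hA.1) ?_
  rintro rfl
  obtain ⟨X, Y, hX, hY, hne⟩ := hl
  exact hne ((le_antisymm (hB.2 hX) (hA.2 hX)).trans (le_antisymm (hB.2 hY) (hA.2 hY)).symm)

/-- A critical value is the slope `(|B| - |A|) / (r B - r A)` between its least and greatest
minimizers, so there are finitely many. -/
lemma finite_setOf_isCriticalValue (M : FinMatroid α) : {l | M.IsCriticalValue l}.Finite := by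
  refine ((M.E.powerset ×ˢ M.E.powerset).finite_toSet.image fun p : Finset α × Finset α =>
    ((#p.2 : ℝ) - #p.1) / (M.r p.2 - M.r p.1)).subset fun l hl => ?_
  have hl0 : 0 ≤ l := zero_le_one.trans hl.one_le
  obtain ⟨A, hA⟩ := M.exists_isLeast_minimizers hl0
  obtain ⟨B, hB⟩ := M.exists_isGreatest_minimizers hl0
  have hr : (M.r A : ℝ) < M.r B := by exact_mod_cast hA.1.r_lt_of_ssubset (hl.ssubset hA hB) hB.1.1
  refine ⟨(A, B), by simp [hA.1.1, hB.1.1], ?_⟩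
  rw [div_eq_iff (sub_pos.2 hr).ne']
  have h₁ := hA.1.f_le hB.1.1
  have h₂ := hB.1.f_le hA.1.1
  simp only [f] at h₁ h₂
  linarith

/-- Bisect at the `ν` where `f_ν A = f_ν B`: either `A` (hence also `B`) minimizes `f_ν`,
or a minimizer of `f_ν` lies strictly between `A` and `B` and we recurse. -/
lemma exists_minimizers_ssubset_between {lam mu : ℝ} (hmu : 0 ≤ mu) (hlt : mu < lam)
    {A B : Finset α} (hA : IsMinimizer M lam A) (hB : IsMinimizer M mu B) (hAB : A ⊂ B) :
    ∃ ν ∈ Set.Icc mu lam, ∃ X Y, IsMinimizer M ν X ∧ IsMinimizer M ν Y ∧ X ⊂ Y ∧ A ⊆ X ∧ Y ⊆ B := by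
  induction B using Finset.strongInduction generalizing mu with
  | H B ih =>
  have hr : (M.r A : ℝ) < M.r B := by exact_mod_cast hA.r_lt_of_ssubset hAB hB.1
  set ν := ((#B : ℝ) - #A) / (M.r B - M.r A)
  have hν : ν * (M.r B - M.r A) = #B - #A := div_mul_cancel₀ _ (sub_pos.2 hr).ne'
  have hfAB : M.f ν A = M.f ν B := by simp only [f]; linarith
  have hνlam : ν ≤ lam := by
    have := hA.f_le hB.1
    simp only [f] at this
    rw [div_le_iff₀ (sub_pos.2 hr)]
    linarith
  have hmuν : mu ≤ ν := by
    have := hB.f_le hA.1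
    simp only [f] at this
    rw [le_div_iff₀ (sub_pos.2 hr)]
    linarith
  by_cases hAν : IsMinimizer M ν A
  · exact ⟨ν, ⟨hmuν, hνlam⟩, A, B, hAν, hAν.of_f_le hB.1 hfAB.ge, hAB, subset_rfl, subset_rfl⟩
  have hνlt : ν < lam := hνlam.lt_of_ne fun h => hAν (h ▸ hA)
  have hmuν' : mu < ν := hmuν.lt_of_ne fun h => hAν ((h ▸ hB).of_f_le hA.1 hfAB.le)
  obtain ⟨C, hC⟩ := M.exists_isMinimizer ν
  have hAC : A ⊂ C := ssubset_of_subset_of_ne (hA.subset_of_lt hC (hmu.trans hmuν) hνlt)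
    (by rintro rfl; exact hAν hC)
  have hCB : C ⊂ B := ssubset_of_subset_of_ne (hC.subset_of_lt hB hmu hmuν')
    (by rintro rfl; exact hAν (hC.of_f_le hA.1 hfAB.le))
  obtain ⟨ν', hν', X, Y, hX, hY, hXY, hAX, hYC⟩ := ih C hCB (hmu.trans hmuν) hνlt hC hAC
  exact ⟨ν', ⟨hmuν.trans hν'.1, hν'.2⟩, X, Y, hX, hY, hXY, hAX, hYC.trans hCB.subset⟩

lemma isLeast_minimizers_of_isGreatest {lam mu : ℝ} (hmu : 0 ≤ mu) (hlt : mu < lam)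
    (hcrit : ∀ ν ∈ Set.Ioo mu lam, ¬ M.IsCriticalValue ν) {A : Finset α}
    (hA : IsGreatest {X | IsMinimizer M lam X} A) : IsLeast {X | IsMinimizer M mu X} A := by
  obtain ⟨B, hB⟩ := M.exists_isLeast_minimizers hmu
  obtain rfl | hAB := (hA.1.subset_of_lt hB.1 hmu hlt).eq_or_ssubset
  · exact hB
  exfalso
  obtain ⟨ν, hν, X, Y, hX, hY, hXY, hAX, hYB⟩ :=
    exists_minimizers_ssubset_between hmu hlt hA.1 hB.1 hAB
  rcases hν.1.eq_or_lt with rfl | hmuν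
  · exact hXY.not_subset (hYB.trans (hB.2 hX))
  rcases hν.2.eq_or_lt with rfl | hνlam
  · exact hXY.not_subset ((hA.2 hY).trans hAX)
  exact hcrit ν ⟨hmuν, hνlam⟩ ⟨X, Y, hX, hY, hXY.ne⟩

end FinMatroid

open FinMatroid in
/-- Principal sequence of a loopless matroid: there are a chain
`∅ = F_0 ⊊ F_1 ⊊ ⋯ ⊊ F_k = E` and critical values `λ_1 > ⋯ > λ_k ≥ 1` such that
`F_{i−1}` and `F_i` are the unique minimal and maximal minimizers of
`f_{λ_i}(X) = λ_i·r(X) − |X|`, and the `λ_i` are exactly the values `λ` for which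
`f_λ` admits more than one minimizer. -/
theorem stmt2 {α : Type*} [DecidableEq α] (M : FinMatroid α)
    (hloop : M.Loopless) (hE : M.E.Nonempty) :
    ∃ (k : ℕ) (F : ℕ → Finset α) (lam : ℕ → ℝ),
      1 ≤ k ∧ F 0 = ∅ ∧ F k = M.E ∧
      (∀ i < k, F i ⊂ F (i + 1)) ∧
      (∀ i, 1 ≤ i → i < k → lam (i + 1) < lam i) ∧
      1 ≤ lam k ∧
      (∀ i, 1 ≤ i → i ≤ k →
        (IsMinimizer M (lam i) (F (i - 1)) ∧
          ∀ X, IsMinimizer M (lam i) X → F (i - 1) ⊆ X) ∧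
        (IsMinimizer M (lam i) (F i) ∧
          ∀ X, IsMinimizer M (lam i) X → X ⊆ F i)) ∧
      (∀ l : ℝ,
        (∃ X Y, IsMinimizer M l X ∧ IsMinimizer M l Y ∧ X ≠ Y) ↔
          ∃ i, 1 ≤ i ∧ i ≤ k ∧ l = lam i) := by
  set S := M.finite_setOf_isCriticalValue.toFinset
  have hS : ∀ l ∈ S, 0 < l ∧ l < #M.E + 1 := fun l hl => by
    rw [Set.Finite.mem_toFinset] at hl
    exact ⟨zero_lt_one.trans_le hl.one_le, (hl.le_card hloop).trans_lt (lt_add_one _)⟩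
  obtain ⟨lam, hlam0, hlamk, hlam_nonneg, hanti, hlam_lt, hcrit⟩ :=
    S.exists_antitone_enumeration_between (by positivity) hS
  simp only [S, Set.Finite.mem_toFinset, Set.mem_ofPred_eq] at hcrit
  set k := #S
  choose F hF using fun i => M.exists_isGreatest_minimizers (hlam_nonneg i)
  have hleast : ∀ i ≤ k, IsLeast {X | IsMinimizer M (lam (i + 1)) X} (F i) := fun i hi =>
    isLeast_minimizers_of_isGreatest (hlam_nonneg _) (hlam_lt i hi) (fun ν hν hνcrit => by
      obtain ⟨j, -, -, rfl⟩ := (hcrit ν).1 hνcrit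
      exact hanti.ne_of_lt_of_lt_nat i hν.1 hν.2 j rfl) (hF i)
  have hF0 : F 0 = ∅ := (hF 0).unique <| by
    rw [hlam0, hloop.minimizers_eq_empty (lt_add_one _)]; exact isGreatest_singleton
  have hFk : F k = M.E := (hleast k le_rfl).unique <| by
    rw [hlamk, M.minimizers_eq_ground_of_lt_one zero_lt_one]; exact isLeast_singleton
  have hk : 1 ≤ k := Nat.one_le_iff_ne_zero.2 fun hk0 => hE.ne_empty (hFk ▸ hk0 ▸ hF0)
  refine ⟨k, F, lam, hk, hF0, hFk, fun i hi => ?_, fun i _ hi => hlam_lt i hi.le,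
    ((hcrit _).2 ⟨k, hk, le_rfl, rfl⟩).one_le, fun i hi1 hik => ?_, hcrit⟩
  · exact ((hcrit _).2 ⟨i + 1, by omega, hi, rfl⟩).ssubset (hleast i hi.le) (hF (i + 1))
  · obtain ⟨j, rfl⟩ := Nat.exists_eq_add_of_le' hi1
    exact ⟨hleast j (by omega), hF (j + 1)⟩
end

section
/- Let M be a loopless matroid on a nonempty finite ground set E with rank function r, with principal sequence ∅ = F_0 ⊊ F_1 ⊊ ⋯ ⊊ F_k = E and critical values λ_1 > ⋯ > λ_k ≥ 1 (i.e., for each i, F_{i−1} and F_i are the unique minimal and unique maximal minimizers of X ↦ λ_i r(X) − |X|). Then for every 1 ≤ i ≤ k, the minor M_i obtained from M by contracting F_{i−1} and restricting to E_i = F_i \ F_{i−1} is uniformly dense with density exactly λ_i; that is, |E_i| = λ_i · r_{M_i}(E_i), and |X| · r_{M_i}(E_i) ≤ |E_i| · r_{M_i}(X) for every X ⊆ E_i, where r_{M_i}(X) = r(X ∪ F_{i−1}) − r(F_{i−1}). -/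
/-- Each principal minor `M_i = (M / F_{i−1})|_{E_i}` of a loopless matroid, where
`E_i = F_i \ F_{i−1}` and the rank function of the minor is
`X ↦ r(X ∪ F_{i−1}) − r(F_{i−1})`, is uniformly dense with density exactly `λ_i`. -/
theorem stmt3 {α : Type*} [DecidableEq α] (M : FinMatroid α)
    (hloop : M.Loopless) (hE : M.E.Nonempty)
    (k : ℕ) (hk : 1 ≤ k) (F : ℕ → Finset α) (lam : ℕ → ℝ)
    (hF0 : F 0 = ∅) (hFk : F k = M.E)
    (hchain : ∀ i < k, F i ⊂ F (i + 1))
    (hdec : ∀ i, 1 ≤ i → i < k → lam (i + 1) < lam i)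
    (hlast : 1 ≤ lam k)
    (hmin : ∀ i, 1 ≤ i → i ≤ k →
      (IsMinimizer M (lam i) (F (i - 1)) ∧
        ∀ X, IsMinimizer M (lam i) X → F (i - 1) ⊆ X) ∧
      (IsMinimizer M (lam i) (F i) ∧
        ∀ X, IsMinimizer M (lam i) X → X ⊆ F i)) :
    ∀ i, 1 ≤ i → i ≤ k →
      (((F i \ F (i - 1)).card : ℝ) =
        lam i * ((M.r ((F i \ F (i - 1)) ∪ F (i - 1)) : ℝ) - (M.r (F (i - 1)) : ℝ))) ∧
      ∀ X ⊆ F i \ F (i - 1),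
        (X.card : ℝ) * ((M.r ((F i \ F (i - 1)) ∪ F (i - 1)) : ℝ) - (M.r (F (i - 1)) : ℝ)) ≤
          ((F i \ F (i - 1)).card : ℝ) * ((M.r (X ∪ F (i - 1)) : ℝ) - (M.r (F (i - 1)) : ℝ)) := by
  intro i hi1 hik
  obtain ⟨⟨hA, -⟩, ⟨hB, -⟩⟩ := hmin i hi1 hik
  set A := F (i - 1) with hAdef
  set B := F i with hBdef
  have hAB : A ⊆ B := by
    have := hchain (i - 1) (by omega)
    rw [Nat.sub_add_cancel hi1] at this
    exact this.subset
  have hUnion : (B \ A) ∪ A = B := Finset.sdiff_union_of_subset hAB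
  have hAE : A ⊆ M.E := hA.1
  have hBE : B ⊆ M.E := hB.1
  have h1 := hA.2 B hBE
  have h2 := hB.2 A hAE
  have hcardAB : (A.card : ℝ) ≤ (B.card : ℝ) := by
    exact_mod_cast Finset.card_le_card hAB
  have hcardsdiff : ((B \ A).card : ℝ) = (B.card : ℝ) - (A.card : ℝ) := by
    rw [Finset.card_sdiff_of_subset hAB]
    push_cast [Nat.cast_sub (Finset.card_le_card hAB)]
    ring
  have hrAB : (M.r A : ℝ) ≤ (M.r B : ℝ) := by exact_mod_cast M.r_mono hAB
  have heq : ((B \ A).card : ℝ) = lam i * ((M.r B : ℝ) - (M.r A : ℝ)) := by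
    rw [hcardsdiff]; linarith
  constructor
  · rw [hUnion]; exact heq
  · intro X hX
    rw [hUnion]
    have hXA : Disjoint X A :=
      Finset.disjoint_left.mpr fun a haX => (Finset.mem_sdiff.mp (hX haX)).2
    have hXAE : X ∪ A ⊆ M.E :=
      Finset.union_subset (fun a ha => hBE (Finset.mem_sdiff.mp (hX ha)).1) hAE
    have h3 := hA.2 (X ∪ A) hXAE
    have hcardXA : ((X ∪ A).card : ℝ) = (X.card : ℝ) + (A.card : ℝ) := by
      exact_mod_cast Finset.card_union_of_disjoint hXA
    have hXle : (X.card : ℝ) ≤ lam i * ((M.r (X ∪ A) : ℝ) - (M.r A : ℝ)) := by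
      rw [hcardXA] at h3; linarith
    have hrXA : (M.r A : ℝ) ≤ (M.r (X ∪ A) : ℝ) := by
      exact_mod_cast M.r_mono Finset.subset_union_right
    nlinarith [mul_le_mul_of_nonneg_right hXle (by linarith : (0:ℝ) ≤ (M.r B : ℝ) - (M.r A : ℝ))]
end

section
/- Let n ≥ 1 and 1 ≤ j ≤ n be integers, let S ⊆ {1, …, n} with |S| = s ≥ 1, and let r be an integer with 1 ≤ r ≤ s; write λ = s/r. Then the average of min(|A ∩ S|, r) over all j-element subsets A of {1, …, n} is at least r · (1 − e^{−λ j / n}); that is, (1/C(n,j)) · Σ_{A ⊆ {1,…,n}, |A| = j} min(|A ∩ S|, r) ≥ r · (1 − e^{−s j /(r n)}). -/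
/-!
Write `d(A) = r - min(|A ∩ S|, r)` for the deficit of `A` and `ρ = 1 - s/(rn)`. Adding a
new element to a `k`-set `B` with `d(B) > 0` lowers the deficit by one exactly when the element
lands in `S \ B`, and `|S \ B| ≥ s·d(B)/r` because `r ≤ s`. Double counting the pairs
(`k`-set, added element) therefore gives `Σ_{|A|=k+1} d(A) / C(n,k+1) ≤ ρ · Σ_{|B|=k} d(B) / C(n,k)`,
so the average deficit over `j`-sets is at most `r ρ^j ≤ r e^{-sj/(rn)}`.
-/

open Finset

lemma one_sub_card_div_nonneg {α : Type*} [Fintype α] (S : Finset α) (r : ℕ) :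
    0 ≤ 1 - (#S : ℝ) / (r * Fintype.card α) := by
  rcases Nat.eq_zero_or_pos r with rfl | hr
  · simp
  rw [sub_nonneg]
  refine div_le_one_of_le₀ ?_ (by positivity)
  calc (#S : ℝ) ≤ Fintype.card α := by exact_mod_cast card_le_univ S
    _ ≤ r * Fintype.card α := le_mul_of_one_le_left (by positivity) (by exact_mod_cast hr)

variable {α : Type*} [DecidableEq α]

lemma sum_powersetCard_sum_sdiff_insert {M : Type*} [AddCommMonoid M] (u : Finset α) (k : ℕ)
    (f : Finset α → M) :
    ∑ B ∈ u.powersetCard k, ∑ v ∈ u \ B, f (insert v B)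
      = (k + 1) • ∑ A ∈ u.powersetCard (k + 1), f A := by
  have pairs : ∑ B ∈ u.powersetCard k, ∑ v ∈ u \ B, f (insert v B)
      = ∑ A ∈ u.powersetCard (k + 1), ∑ _v ∈ A, f A := by
    rw [sum_sigma', sum_sigma']
    refine sum_nbij' (fun p ↦ ⟨insert p.2 p.1, p.2⟩) (fun p ↦ ⟨p.1.erase p.2, p.2⟩)
      ?_ ?_ ?_ ?_ (fun _ _ ↦ rfl)
    · rintro ⟨B, v⟩ hp
      simp only [mem_sigma, mem_powersetCard, mem_sdiff] at hp ⊢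
      obtain ⟨⟨hBu, rfl⟩, hvu, hvB⟩ := hp
      exact ⟨⟨insert_subset hvu hBu, card_insert_of_notMem hvB⟩, mem_insert_self _ _⟩
    · rintro ⟨A, v⟩ hp
      simp only [mem_sigma, mem_powersetCard, mem_sdiff] at hp ⊢
      obtain ⟨⟨hAu, hAk⟩, hvA⟩ := hp
      exact ⟨⟨(erase_subset _ _).trans hAu, by simp [card_erase_of_mem hvA, hAk]⟩,
        hAu hvA, notMem_erase _ _⟩
    · rintro ⟨B, v⟩ hp
      simp only [mem_sigma, mem_powersetCard, mem_sdiff] at hp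
      simp [erase_insert hp.2.2]
    · rintro ⟨A, v⟩ hp
      simp only [mem_sigma, mem_powersetCard] at hp
      simp [insert_erase hp.2]
  rw [pairs, smul_sum]
  refine sum_congr rfl fun A hA ↦ ?_
  rw [sum_const, (mem_powersetCard.mp hA).2]

-- Truncated subtraction makes this `r - min(|A ∩ S|, r)`.
def deficit (S : Finset α) (r : ℕ) (A : Finset α) : ℕ := r - #(A ∩ S)

lemma deficit_insert_of_notMem (S : Finset α) (r : ℕ) {v : α} {B : Finset α} (hv : v ∉ B) :
    deficit S r (insert v B) = deficit S r B - if v ∈ S then 1 else 0 := by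
  unfold deficit
  split_ifs with hvS
  · rw [insert_inter_of_mem hvS, card_insert_of_notMem fun h ↦ hv (mem_inter.mp h).1]
    omega
  · rw [insert_inter_of_notMem hvS, Nat.sub_zero]

lemma card_mul_deficit_le_mul_card_sdiff (S : Finset α) {r : ℕ} (hrs : r ≤ #S) (B : Finset α) :
    #S * deficit S r B ≤ r * #(S \ B) := by
  have hsdiff := card_sdiff_add_card_inter S B
  rw [inter_comm] at hsdiff
  unfold deficit
  rcases le_total r #(B ∩ S) with h | h
  · simp [Nat.sub_eq_zero_of_le h]
  · rw [show #(S \ B) = #S - #(B ∩ S) by omega]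
    zify [h, h.trans hrs]
    nlinarith [Nat.zero_le #(B ∩ S)]

variable [Fintype α]

lemma sum_deficit_insert_le (S : Finset α) {r : ℕ} (hrs : r ≤ #S) (B : Finset α) :
    ∑ v ∈ univ \ B, (deficit S r (insert v B) : ℝ)
      ≤ #(univ \ B) * (1 - #S / (r * Fintype.card α)) * deficit S r B := by
  rcases Nat.eq_zero_or_pos (deficit S r B) with hB | hB
  · refine (sum_eq_zero fun v hv ↦ ?_).le.trans (by simp [hB])
    rw [deficit_insert_of_notMem S r (mem_sdiff.mp hv).2, hB, Nat.zero_sub, Nat.cast_zero]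
  have hr : (0 : ℝ) < r := by
    unfold deficit at hB
    exact_mod_cast Nat.zero_lt_of_lt (hB.trans_le (Nat.sub_le _ _))
  have hsum : ∑ v ∈ univ \ B, (deficit S r (insert v B) : ℝ)
      = #(univ \ B) * deficit S r B - #(S \ B) := by
    rw [sum_congr rfl fun v hv ↦ by
      rw [deficit_insert_of_notMem S r (mem_sdiff.mp hv).2, Nat.cast_sub (by split_ifs <;> omega),
        Nat.cast_ite, Nat.cast_one, Nat.cast_zero],
      sum_sub_distrib, sum_const, sum_boole, nsmul_eq_mul]
    congr 3
    ext v; simp [and_comm]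
  have hfrac : (#(univ \ B) : ℝ) / Fintype.card α ≤ 1 :=
    div_le_one_of_le₀ (by exact_mod_cast card_le_univ _) (Nat.cast_nonneg _)
  have hS : (#S : ℝ) * deficit S r B / r ≤ #(S \ B) := by
    rw [div_le_iff₀ hr, mul_comm _ (r : ℝ)]
    exact_mod_cast card_mul_deficit_le_mul_card_sdiff S hrs B
  calc ∑ v ∈ univ \ B, (deficit S r (insert v B) : ℝ)
      ≤ #(univ \ B) * deficit S r B
          - #(univ \ B) / Fintype.card α * (#S * deficit S r B / r) := by
        rw [hsum]
        gcongr
        exact (mul_le_of_le_one_left (by positivity) hfrac).trans hS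
    _ = #(univ \ B) * (1 - #S / (r * Fintype.card α)) * deficit S r B := by
        field_simp

lemma sum_powersetCard_deficit_le (S : Finset α) {r : ℕ} (hrs : r ≤ #S) (k : ℕ) :
    ∑ A ∈ univ.powersetCard k, (deficit S r A : ℝ)
      ≤ (Fintype.card α).choose k * r * (1 - #S / (r * Fintype.card α)) ^ k := by
  set n := Fintype.card α
  set ρ : ℝ := 1 - #S / (r * n)
  induction k with
  | zero => simp [deficit]
  | succ k ih =>
    have hchoose : ((n - k : ℕ) : ℝ) * n.choose k = (k + 1) * n.choose (k + 1) := by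
      rw [mul_comm]
      exact_mod_cast (n.choose_succ_right_eq k).symm.trans (mul_comm _ _)
    have hρ : 0 ≤ ρ := one_sub_card_div_nonneg S r
    refine le_of_mul_le_mul_left ?_ (by positivity : (0 : ℝ) < k + 1)
    calc ((k : ℝ) + 1) * ∑ A ∈ univ.powersetCard (k + 1), (deficit S r A : ℝ)
        = ∑ B ∈ univ.powersetCard k, ∑ v ∈ univ \ B, (deficit S r (insert v B) : ℝ) := by
          rw [sum_powersetCard_sum_sdiff_insert univ k fun A ↦ (deficit S r A : ℝ), nsmul_eq_mul,
            Nat.cast_succ]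
      _ ≤ ∑ B ∈ univ.powersetCard k, ((n - k : ℕ) : ℝ) * ρ * deficit S r B := by
          refine sum_le_sum fun B hB ↦ ?_
          rw [← (mem_powersetCard.mp hB).2, ← card_univ_sdiff]
          exact sum_deficit_insert_le S hrs B
      _ ≤ ((n - k : ℕ) : ℝ) * ρ * (n.choose k * r * ρ ^ k) := by
          rw [← mul_sum]
          gcongr
      _ = (k + 1) * (n.choose (k + 1) * r * ρ ^ (k + 1)) := by
          linear_combination (r * ρ ^ (k + 1)) * hchoose

lemma one_sub_pow_le_exp_neg_mul {x : ℝ} (hx : 0 ≤ 1 - x) (j : ℕ) :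
    (1 - x) ^ j ≤ Real.exp (-(x * j)) := by
  calc (1 - x) ^ j ≤ Real.exp (-x) ^ j := pow_le_pow_left₀ hx (Real.one_sub_le_exp_neg x) j
    _ = Real.exp (-(x * j)) := by rw [← Real.exp_nat_mul]; ring_nf

theorem stmt6_general (n j s r : ℕ) (hjn : j ≤ n)
    (S : Finset (Fin n)) (hS : S.card = s) (hrs : r ≤ s) :
    (r : ℝ) * (1 - Real.exp (-((s : ℝ) * (j : ℝ)) / ((r : ℝ) * (n : ℝ)))) ≤
      (1 / (n.choose j : ℝ)) *
        ∑ A ∈ (Finset.univ : Finset (Fin n)).powersetCard j,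
          (min (A ∩ S).card r : ℝ) := by
  subst hS
  have hmin : ∀ A : Finset (Fin n), (min #(A ∩ S) r : ℝ) = r - deficit S r A := fun A ↦ by
    rw [deficit, ← Nat.cast_sub (Nat.sub_le _ _), Nat.sub_sub_eq_min, min_comm, Nat.cast_min]
  have hdeficit := sum_powersetCard_deficit_le S hrs j
  have hexp := one_sub_pow_le_exp_neg_mul (one_sub_card_div_nonneg S r) j
  rw [Fintype.card_fin] at hdeficit hexp
  have hC : (0 : ℝ) < n.choose j := by exact_mod_cast Nat.choose_pos hjn
  rw [sum_congr rfl fun A _ ↦ hmin A, sum_sub_distrib, sum_const, card_powersetCard, card_univ,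
    Fintype.card_fin, nsmul_eq_mul, one_div, inv_mul_eq_div, le_div_iff₀ hC,
    neg_div, mul_div_right_comm]
  have hCr : (0 : ℝ) ≤ n.choose j * r := by positivity
  linarith [mul_le_mul_of_nonneg_left hexp hCr]

/-- For `S ⊆ {1,…,n}` with `|S| = s ≥ 1` and `1 ≤ r ≤ s`, the average of
`min(|A ∩ S|, r)` over all `j`-element subsets `A` of `{1,…,n}` is at least
`r · (1 − e^{−s·j/(r·n)})`. -/
theorem stmt6 (n j s r : ℕ) (hn : 1 ≤ n) (hj1 : 1 ≤ j) (hjn : j ≤ n)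
    (S : Finset (Fin n)) (hS : S.card = s) (hs : 1 ≤ s) (hr1 : 1 ≤ r) (hrs : r ≤ s) :
    (r : ℝ) * (1 - Real.exp (-((s : ℝ) * (j : ℝ)) / ((r : ℝ) * (n : ℝ)))) ≤
      (1 / (n.choose j : ℝ)) *
        ∑ A ∈ (Finset.univ : Finset (Fin n)).powersetCard j,
          (min (A ∩ S).card r : ℝ) :=
  stmt6_general n j s r hjn S hS hrs
end

section
/- Let n ≥ 1 and 1 ≤ j ≤ n be integers, let S ⊆ {1, …, n} with |S| = s ≥ 1, let r be an integer with 1 ≤ r ≤ s, and write λ = s/r. If λ ≥ n/j, then (1/C(n,j)) · Σ_{A ⊆ {1,…,n}, |A| = j} min(|A ∩ S|, r) ≥ (1 − 1/e) · r. If instead λ ≤ n/j, then (1/C(n,j)) · Σ_{A ⊆ {1,…,n}, |A| = j} min(|A ∩ S|, r) ≥ (1 − 1/e) · s · j / n. -/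
/-!
Write `s = |S|` and call `r - min(|A ∩ S|, r)` the deficit of `A`. Extending a `t`-set `B` by
each of the `n - t` points outside it, the deficit drops by one for the `|S \ B|` points of
`S \ B` as long as `|B ∩ S| < r`; since `r ≤ s`, averaging this double count over `B` shows that
the mean deficit over `t`-sets shrinks by a factor at least `1 - s/(rn)` per step. So the mean
of `min(|A ∩ S|, r)` over `j`-sets is at least `r (1 - (1 - s/(rn))^j) ≥ r (1 - e^{-x})` with
`x = sj/(rn)`, and `1 - e^{-x}` is at least `1 - 1/e` when `x ≥ 1` and at least `(1 - 1/e) x`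
when `x ≤ 1`, by convexity of `exp`.
-/

open Finset

theorem sum_powersetCard_succ_nsmul {α β : Type*} [Fintype α] [DecidableEq α]
    [AddCommMonoid β] (f : Finset α → β) (t : ℕ) :
    ∑ A ∈ univ.powersetCard (t + 1), (t + 1) • f A =
      ∑ B ∈ univ.powersetCard t, ∑ x ∈ Bᶜ, f (insert x B) := by
  have hcard : ∑ A ∈ univ.powersetCard (t + 1), (t + 1) • f A =
      ∑ A ∈ univ.powersetCard (t + 1), ∑ _x ∈ A, f A :=
    sum_congr rfl fun A hA => by rw [sum_const, (mem_powersetCard.1 hA).2]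
  rw [hcard, sum_sigma', sum_sigma']
  refine sum_nbij' (fun p => ⟨p.1.erase p.2, p.2⟩) (fun p => ⟨insert p.2 p.1, p.2⟩)
    ?_ ?_ ?_ ?_ ?_
  · rintro ⟨A, x⟩ h
    simp only [mem_sigma, mem_powersetCard] at h ⊢
    simp [card_erase_of_mem h.2, h.1.2]
  · rintro ⟨B, x⟩ h
    simp only [mem_sigma, mem_powersetCard, mem_compl] at h ⊢
    simp [card_insert_of_notMem h.2, h.1.2]
  · rintro ⟨A, x⟩ h
    simp only [mem_sigma] at h
    simp [insert_erase h.2]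
  · rintro ⟨B, x⟩ h
    simp only [mem_sigma, mem_compl] at h
    simp [erase_insert h.2]
  · rintro ⟨A, x⟩ h
    simp only [mem_sigma] at h
    simp [insert_erase h.2]

theorem card_div_mul_card_le_one {α : Type*} [Fintype α] (S : Finset α) {r : ℕ} (hr : 0 < r) :
    (#S : ℝ) / (r * Fintype.card α) ≤ 1 := by
  have hsn : #S ≤ r * Fintype.card α := (card_le_univ S).trans (Nat.le_mul_of_pos_left _ hr)
  exact div_le_one_of_le₀ (by exact_mod_cast hsn) (by positivity)

section Deficit

variable {α : Type*} [DecidableEq α] (S : Finset α) (r : ℕ)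

theorem sub_card_inter_insert_add {B : Finset α} {x : α} (hx : x ∉ B) :
    r - #(insert x B ∩ S) + (if x ∈ S ∧ #(B ∩ S) < r then 1 else 0) = r - #(B ∩ S) := by
  by_cases hxS : x ∈ S
  · rw [insert_inter_of_mem hxS, card_insert_of_notMem (by simp [hx])]
    simp only [hxS, true_and]
    split_ifs <;> omega
  · simp [insert_inter_of_notMem hxS, hxS]

variable [Fintype α]

/-- `r - #(A ∩ S)` is truncated subtraction, i.e. `r - min #(A ∩ S) r`. -/
def deficitSum (t : ℕ) : ℕ := ∑ A ∈ univ.powersetCard t, (r - #(A ∩ S))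

theorem sum_compl_sub_card_inter_insert_add (B : Finset α) :
    ∑ x ∈ Bᶜ, (r - #(insert x B ∩ S)) + (if #(B ∩ S) < r then #(S \ B) else 0) =
      #Bᶜ * (r - #(B ∩ S)) := by
  have hfilter :
      {x ∈ Bᶜ | x ∈ S ∧ #(B ∩ S) < r} = if #(B ∩ S) < r then S \ B else ∅ := by
    ext x; split_ifs <;> simp [*, and_comm]
  have hgain := sum_boole (R := ℕ) (fun x => x ∈ S ∧ #(B ∩ S) < r) Bᶜ
  rw [hfilter, apply_ite card, card_empty, Nat.cast_id] at hgain
  rw [← hgain, ← sum_add_distrib, ← smul_eq_mul, ← sum_const]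
  exact sum_congr rfl fun x hx => sub_card_inter_insert_add S r (mem_compl.1 hx)

variable {S r}

theorem mul_sum_compl_deficit_le (hrS : r ≤ #S) (B : Finset α) :
    (r : ℝ) * ∑ x ∈ Bᶜ, ((r - #(insert x B ∩ S) : ℕ) : ℝ) ≤
      (r * #Bᶜ - #S) * ((r - #(B ∩ S) : ℕ) : ℝ) := by
  have h := congrArg (Nat.cast (R := ℝ)) (sum_compl_sub_card_inter_insert_add S r B)
  push_cast at h
  rw [← eq_sub_iff_add_eq] at h
  rw [h]
  suffices (#S : ℝ) * ((r - #(B ∩ S) : ℕ) : ℝ) ≤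
      r * ((if #(B ∩ S) < r then #(S \ B) else 0 : ℕ) : ℝ) by
    push_cast at this ⊢; linarith
  split_ifs with hk
  -- `#S (r - k) ≤ r (#S - k)` for `k = #(B ∩ S)`, because `r ≤ #S`
  · have hkS : #(B ∩ S) ≤ #S := card_le_card inter_subset_right
    rw [card_sdiff, Nat.cast_sub hk.le, Nat.cast_sub hkS]
    nlinarith [(Nat.cast_le (α := ℝ)).2 hrS, Nat.cast_nonneg (α := ℝ) #(B ∩ S)]
  · simp [Nat.sub_eq_zero_of_le (not_lt.1 hk)]

theorem mul_succ_mul_deficitSum_succ_le (hrS : r ≤ #S) (t : ℕ) :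
    (r : ℝ) * (t + 1) * deficitSum S r (t + 1) ≤
      (r * (Fintype.card α - t : ℕ) - #S) * deficitSum S r t := by
  have hcount := sum_powersetCard_succ_nsmul (fun A => ((r - #(A ∩ S) : ℕ) : ℝ)) t
  simp only [nsmul_eq_mul, ← mul_sum, Nat.cast_add, Nat.cast_one] at hcount
  calc (r : ℝ) * (t + 1) * deficitSum S r (t + 1)
      = ∑ B ∈ univ.powersetCard t,
          r * ∑ x ∈ Bᶜ, ((r - #(insert x B ∩ S) : ℕ) : ℝ) := by
        rw [← mul_sum, ← hcount, deficitSum, Nat.cast_sum, mul_assoc]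
    _ ≤ ∑ B ∈ univ.powersetCard t, (r * #Bᶜ - #S) * ((r - #(B ∩ S) : ℕ) : ℝ) :=
        sum_le_sum fun B _ => mul_sum_compl_deficit_le hrS B
    _ = (r * (Fintype.card α - t : ℕ) - #S) * deficitSum S r t := by
        rw [deficitSum, Nat.cast_sum, mul_sum]
        refine sum_congr rfl fun B hB => ?_
        rw [card_compl, (mem_powersetCard.1 hB).2]

theorem deficitSum_succ_div_choose_le (hr : 0 < r) (hrS : r ≤ #S) {t : ℕ}
    (ht : t < Fintype.card α) :
    (deficitSum S r (t + 1) : ℝ) / (Fintype.card α).choose (t + 1) ≤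
      (1 - #S / (r * Fintype.card α)) * (deficitSum S r t / (Fintype.card α).choose t) := by
  set n := Fintype.card α
  have hrec := mul_succ_mul_deficitSum_succ_le hrS t
  rw [Nat.cast_sub ht.le] at hrec
  have hchoose : ((n.choose (t + 1) : ℕ) : ℝ) * (t + 1) = n.choose t * (n - t) := by
    rw [← Nat.cast_sub ht.le]
    exact_mod_cast Nat.choose_succ_right_eq n t
  have hr' : (0 : ℝ) < r := by exact_mod_cast hr
  have hm : (0 : ℝ) < n - t := by rw [sub_pos]; exact_mod_cast ht
  have hc : (0 : ℝ) < n.choose t := by exact_mod_cast Nat.choose_pos ht.le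
  have hc' : (0 : ℝ) < n.choose (t + 1) := by exact_mod_cast Nat.choose_pos ht
  calc (deficitSum S r (t + 1) : ℝ) / n.choose (t + 1)
      = r * (t + 1) * deficitSum S r (t + 1) / (r * (n - t) * n.choose t) := by
        rw [div_eq_div_iff hc'.ne' (by positivity)]
        linear_combination -(r * deficitSum S r (t + 1) : ℝ) * hchoose
    _ ≤ (r * (n - t) - #S) * deficitSum S r t / (r * (n - t) * n.choose t) := by
        gcongr
    _ = (1 - #S / (r * (n - t))) * (deficitSum S r t / n.choose t) := by
        field_simp
    _ ≤ (1 - #S / (r * n)) * (deficitSum S r t / n.choose t) := by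
        gcongr
        linarith

theorem deficitSum_div_choose_le (hr : 0 < r) (hrS : r ≤ #S) {t : ℕ}
    (ht : t ≤ Fintype.card α) :
    (deficitSum S r t : ℝ) / (Fintype.card α).choose t ≤
      r * (1 - #S / (r * Fintype.card α)) ^ t := by
  induction t with
  | zero => simp [deficitSum]
  | succ t ih =>
    have hq : 0 ≤ 1 - #S / (r * Fintype.card α : ℝ) :=
      sub_nonneg.2 (card_div_mul_card_le_one S hr)
    calc (deficitSum S r (t + 1) : ℝ) / (Fintype.card α).choose (t + 1)
        ≤ (1 - #S / (r * Fintype.card α)) * (deficitSum S r t / (Fintype.card α).choose t) :=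
          deficitSum_succ_div_choose_le hr hrS ht
      _ ≤ (1 - #S / (r * Fintype.card α)) * (r * (1 - #S / (r * Fintype.card α)) ^ t) := by
          gcongr; exact ih (by omega)
      _ = r * (1 - #S / (r * Fintype.card α)) ^ (t + 1) := by ring

theorem sum_min_card_inter_eq (t : ℕ) :
    ∑ A ∈ univ.powersetCard t, (min #(A ∩ S) r : ℝ) =
      r * (Fintype.card α).choose t - deficitSum S r t := by
  have hmin (A : Finset α) : (min #(A ∩ S) r : ℝ) = r - ((r - #(A ∩ S) : ℕ) : ℝ) := by
    rw [← Nat.cast_min, min_comm, ← Nat.sub_sub_eq_min, Nat.cast_sub (Nat.sub_le _ _)]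
  rw [sum_congr rfl fun A _ => hmin A, sum_sub_distrib, sum_const, card_powersetCard,
    card_univ, nsmul_eq_mul, mul_comm, deficitSum, Nat.cast_sum]

end Deficit

theorem one_sub_pow_le_exp_neg_mul_s7 {a : ℝ} (ha : a ≤ 1) (t : ℕ) :
    (1 - a) ^ t ≤ Real.exp (-(a * t)) := by
  calc (1 - a) ^ t ≤ Real.exp (-a) ^ t :=
        pow_le_pow_left₀ (by linarith) (Real.one_sub_le_exp_neg a) t
    _ = Real.exp (-(a * t)) := by rw [← Real.exp_nat_mul]; ring_nf

theorem one_sub_inv_exp_one_le_one_sub_exp_neg {x : ℝ} (hx : 1 ≤ x) :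
    1 - (Real.exp 1)⁻¹ ≤ 1 - Real.exp (-x) := by
  rw [← Real.exp_neg]
  gcongr

theorem one_sub_inv_exp_one_mul_le_one_sub_exp_neg {x : ℝ} (h0 : 0 ≤ x) (h1 : x ≤ 1) :
    (1 - (Real.exp 1)⁻¹) * x ≤ 1 - Real.exp (-x) := by
  have hconv := convexOn_exp.2 (Set.mem_univ (-1)) (Set.mem_univ 0) h0 (sub_nonneg.2 h1)
    (add_sub_cancel x 1)
  simp only [smul_eq_mul, mul_neg, mul_one, mul_zero, add_zero, Real.exp_zero,
    Real.exp_neg] at hconv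
  rw [Real.exp_neg]
  linarith

theorem one_sub_exp_neg_le_avg_min_card_inter {α : Type*} [Fintype α] [DecidableEq α]
    {S : Finset α} {r t : ℕ} (hr : 0 < r) (hrS : r ≤ #S) (ht : t ≤ Fintype.card α) :
    r * (1 - Real.exp (-(#S * t / (r * Fintype.card α)))) ≤
      1 / (Fintype.card α).choose t * ∑ A ∈ univ.powersetCard t, (min #(A ∩ S) r : ℝ) := by
  have hc : ((Fintype.card α).choose t : ℝ) ≠ 0 := by exact_mod_cast (Nat.choose_pos ht).ne'
  have hdef := deficitSum_div_choose_le hr hrS ht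
  have hpow := one_sub_pow_le_exp_neg_mul_s7 (card_div_mul_card_le_one S hr) t
  rw [sum_min_card_inter_eq, one_div_mul_eq_div, sub_div, mul_div_cancel_right₀ _ hc]
  rw [div_mul_eq_mul_div] at hpow
  nlinarith [(Nat.cast_pos (α := ℝ)).2 hr]

theorem stmt7_general (n j s r : ℕ) (hj1 : 1 ≤ j) (hjn : j ≤ n)
    (S : Finset (Fin n)) (hS : S.card = s) (hr1 : 1 ≤ r) (hrs : r ≤ s) :
    (((n : ℝ) / (j : ℝ) ≤ (s : ℝ) / (r : ℝ) →
      (1 - (Real.exp 1)⁻¹) * (r : ℝ) ≤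
        (1 / (n.choose j : ℝ)) *
          ∑ A ∈ (Finset.univ : Finset (Fin n)).powersetCard j,
            (min (A ∩ S).card r : ℝ))) ∧
    (((s : ℝ) / (r : ℝ) ≤ (n : ℝ) / (j : ℝ) →
      (1 - (Real.exp 1)⁻¹) * (s : ℝ) * (j : ℝ) / (n : ℝ) ≤
        (1 / (n.choose j : ℝ)) *
          ∑ A ∈ (Finset.univ : Finset (Fin n)).powersetCard j,
            (min (A ∩ S).card r : ℝ))) := by
  subst hS
  have hbound := one_sub_exp_neg_le_avg_min_card_inter hr1 hrs (t := j)
    (by rwa [Fintype.card_fin])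
  rw [Fintype.card_fin] at hbound
  have hr : (0 : ℝ) < r := by exact_mod_cast hr1
  have hj : (0 : ℝ) < j := by exact_mod_cast hj1
  have hn : (0 : ℝ) < n := by exact_mod_cast hj1.trans hjn
  set x : ℝ := #S * j / (r * n)
  refine ⟨fun hcase => ?_, fun hcase => ?_⟩
  · have hx : 1 ≤ x := by
      rw [div_le_div_iff₀ hj hr] at hcase
      rw [le_div_iff₀ (by positivity)]
      linarith
    calc (1 - (Real.exp 1)⁻¹) * r ≤ r * (1 - Real.exp (-x)) := by
          rw [mul_comm]
          exact mul_le_mul_of_nonneg_left (one_sub_inv_exp_one_le_one_sub_exp_neg hx) hr.le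
      _ ≤ _ := hbound
  · have hx : x ≤ 1 := by
      rw [div_le_div_iff₀ hr hj] at hcase
      rw [div_le_one (by positivity)]
      linarith
    calc (1 - (Real.exp 1)⁻¹) * #S * j / n = r * ((1 - (Real.exp 1)⁻¹) * x) := by
          simp only [x]; field_simp
      _ ≤ r * (1 - Real.exp (-x)) := by
          gcongr; exact one_sub_inv_exp_one_mul_le_one_sub_exp_neg (by positivity) hx
      _ ≤ _ := hbound

/-- For `S ⊆ {1,…,n}` with `|S| = s ≥ 1`, `1 ≤ r ≤ s` and `λ = s/r`: if `λ ≥ n/j` then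
the average of `min(|A ∩ S|, r)` over all `j`-element subsets `A` of `{1,…,n}` is at
least `(1 − 1/e)·r`; if `λ ≤ n/j` it is at least `(1 − 1/e)·s·j/n`. -/
theorem stmt7 (n j s r : ℕ) (hn : 1 ≤ n) (hj1 : 1 ≤ j) (hjn : j ≤ n)
    (S : Finset (Fin n)) (hS : S.card = s) (hs : 1 ≤ s) (hr1 : 1 ≤ r) (hrs : r ≤ s) :
    (((n : ℝ) / (j : ℝ) ≤ (s : ℝ) / (r : ℝ) →
      (1 - (Real.exp 1)⁻¹) * (r : ℝ) ≤
        (1 / (n.choose j : ℝ)) *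
          ∑ A ∈ (Finset.univ : Finset (Fin n)).powersetCard j,
            (min (A ∩ S).card r : ℝ))) ∧
    (((s : ℝ) / (r : ℝ) ≤ (n : ℝ) / (j : ℝ) →
      (1 - (Real.exp 1)⁻¹) * (s : ℝ) * (j : ℝ) / (n : ℝ) ≤
        (1 / (n.choose j : ℝ)) *
          ∑ A ∈ (Finset.univ : Finset (Fin n)).powersetCard j,
            (min (A ∩ S).card r : ℝ))) :=
  stmt7_general n j s r hj1 hjn S hS hr1 hrs
end

section
/- Let M be a loopless matroid on a finite ground set E with |E| = n and rank function r. Let ∅ = F_0 ⊊ F_1 ⊊ ⋯ ⊊ F_k = E be a chain of subsets, set E_i = F_i \ F_{i−1} and r_i = r(F_i) − r(F_{i−1}), and assume r_i ≥ 1 for all i and that the densities λ_i = |E_i| / r_i satisfy λ_1 > λ_2 > ⋯ > λ_k ≥ 1 (as holds for the principal sequence of M). Then for every 1 ≤ j ≤ n, the average over all j-element subsets A of E of Σ_{i=1}^k min(|A ∩ E_i|, r_i) is at least (1 − 1/e) times the average over all j-element subsets A of E of r(A); that is, Σ_{|A| = j} Σ_{i=1}^k min(|A ∩ E_i|, r_i)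 ≥ (1 − 1/e) · Σ_{|A| = j} r(A). -/
/-!
Let `t` be the number of leading blocks with `r_i ≤ j |E_i| / n`; because the densities decrease,
these blocks are exactly `E_1, …, E_t`. Every `A` satisfies `r(A) ≤ r(F_t) + |A \ F_t|`, so the
average of `r(A)` over `j`-sets is at most `r(F_t) + (j/n) |E \ F_t| = Σ_i min(j |E_i| / n, r_i)`.
On the other side, `min(x, ρ) ≥ ρ (1 - (1 - 1/ρ)^x)`, and for `c = 1 - 1/ρ` the average of
`c^|A ∩ E_i|` is at most `exp(-j |E_i| / (n ρ))` by Maclaurin's inequality applied to the weights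
`c` on `E_i` and `1` off it. Concavity of `1 - e^{-u}` finishes the comparison.
-/

open Finset

theorem mul_one_sub_one_sub_inv_pow_le_min {ρ : ℝ} (hρ : 1 ≤ ρ) (x : ℕ) :
    ρ * (1 - (1 - ρ⁻¹) ^ x) ≤ min (x : ℝ) ρ := by
  have hρ0 : 0 < ρ := by linarith
  have hinv : ρ⁻¹ ≤ 1 := inv_le_one_of_one_le₀ hρ
  refine le_min ?_ ?_
  · have bernoulli := one_add_mul_le_pow (a := -ρ⁻¹) (by linarith) x
    calc ρ * (1 - (1 - ρ⁻¹) ^ x) ≤ ρ * (x * ρ⁻¹) := by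
          simp only [mul_neg, ← sub_eq_add_neg] at bernoulli
          gcongr
          linarith
      _ = x := by field_simp
  · have : 0 ≤ (1 - ρ⁻¹) ^ x := pow_nonneg (by linarith) x
    nlinarith

theorem one_sub_exp_neg_one_mul_min_le {u : ℝ} (hu : 0 ≤ u) :
    (1 - Real.exp (-1)) * min u 1 ≤ 1 - Real.exp (-u) := by
  rcases le_total u 1 with h | h
  · rw [min_eq_left h]
    have hconv := convexOn_exp.2 (Set.mem_univ 0) (Set.mem_univ (-1)) (sub_nonneg.2 h) hu
      (by ring)
    simp only [smul_eq_mul, mul_zero, zero_add, mul_neg, mul_one, Real.exp_zero] at hconv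
    linarith
  · rw [min_eq_right h]
    linarith [Real.exp_le_exp.2 (neg_le_neg h)]

theorem Nat.choose_pred_mul_eq (n : ℕ) {j : ℕ} (hj : 1 ≤ j) :
    (n - 1).choose (j - 1) * n = n.choose j * j := by
  obtain ⟨j, rfl⟩ := Nat.exists_eq_add_of_le' hj
  rcases n with _ | n
  · simp
  simpa [mul_comm] using Nat.add_one_mul_choose_eq n j

namespace Finset

variable {α : Type*} [DecidableEq α]

theorem sum_powersetCard_succ_sum_mem {β : Type*} [AddCommMonoid β] (E : Finset α) (j : ℕ)
    (f : Finset α → α → β) :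
    ∑ U ∈ E.powersetCard (j + 1), ∑ a ∈ U, f U a =
      ∑ T ∈ E.powersetCard j, ∑ a ∈ E \ T, f (insert a T) a := by
  rw [sum_sigma', sum_sigma']
  refine sum_nbij' (fun x => ⟨x.1.erase x.2, x.2⟩) (fun x => ⟨insert x.2 x.1, x.2⟩)
    ?_ ?_ ?_ ?_ ?_
  · rintro ⟨U, a⟩ h
    simp only [mem_sigma, mem_powersetCard] at h
    simp only [mem_sigma, mem_powersetCard, mem_sdiff, notMem_erase, not_false_eq_true,
      and_true, card_erase_of_mem h.2, h.1.2, add_tsub_cancel_right]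
    exact ⟨(erase_subset _ _).trans h.1.1, h.1.1 h.2⟩
  · rintro ⟨T, a⟩ h
    simp only [mem_sigma, mem_powersetCard, mem_sdiff] at h
    simp only [mem_sigma, mem_powersetCard, mem_insert_self, and_true,
      card_insert_of_notMem h.2.2, h.1.2]
    exact insert_subset h.2.1 h.1.1
  · rintro ⟨U, a⟩ h
    simp [insert_erase (mem_sigma.1 h).2]
  · rintro ⟨T, a⟩ h
    simp [erase_insert (mem_sdiff.1 (mem_sigma.1 h).2).2]
  · rintro ⟨U, a⟩ h
    simp [insert_erase (mem_sigma.1 h).2]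

theorem sum_powersetCard_card_inter {E S : Finset α} (hS : S ⊆ E) {j : ℕ} (hj : 1 ≤ j) :
    ∑ A ∈ E.powersetCard j, #(A ∩ S) = #S * (#E - 1).choose (j - 1) := by
  have hcount : ∀ e ∈ S, #{A ∈ E.powersetCard j | e ∈ A} = (#E - 1).choose (j - 1) :=
    fun e he => by
      simpa using card_filter_powersetCard_subset {e} E j (by simpa using hS he) (by simpa)
  simp_rw [inter_comm _ S, ← filter_mem_eq_inter, card_filter]
  rw [sum_comm, ← sum_const_nat hcount]
  simp_rw [card_filter]

section CommRing

variable {R : Type*} [CommRing R] (E : Finset α) (w : α → R)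

theorem succ_mul_sum_powersetCard_succ_prod (j : ℕ) :
    (j + 1) * ∑ U ∈ E.powersetCard (j + 1), ∏ e ∈ U, w e =
      ∑ T ∈ E.powersetCard j, (∏ e ∈ T, w e) * ∑ a ∈ E \ T, w a := by
  have hcard : ∀ U ∈ E.powersetCard (j + 1), ((j : R) + 1) * ∏ e ∈ U, w e =
      ∑ a ∈ U, ∏ e ∈ U, w e := fun U hU => by
    rw [sum_const, (mem_powersetCard.1 hU).2, nsmul_eq_mul]; push_cast; rfl
  rw [mul_sum, sum_congr rfl hcard, sum_powersetCard_succ_sum_mem]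
  refine sum_congr rfl fun T _ => ?_
  rw [mul_sum]
  refine sum_congr rfl fun a ha => ?_
  rw [prod_insert (mem_sdiff.1 ha).2, mul_comm]

theorem sum_powersetCard_succ_prod_mul_sum (j : ℕ) :
    ∑ U ∈ E.powersetCard (j + 1), (∏ e ∈ U, w e) * ∑ b ∈ U, w b =
      ∑ T ∈ E.powersetCard j, (∏ e ∈ T, w e) * ∑ b ∈ E \ T, w b ^ 2 := by
  simp_rw [mul_sum]
  rw [sum_powersetCard_succ_sum_mem]
  refine sum_congr rfl fun T _ => sum_congr rfl fun b hb => ?_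
  rw [prod_insert (mem_sdiff.1 hb).2]
  ring

theorem succ_mul_sum_powersetCard_succ_prod_mul_sum_sdiff (j : ℕ) :
    (j + 1) * ∑ U ∈ E.powersetCard (j + 1), (∏ e ∈ U, w e) * ∑ a ∈ E \ U, w a =
      ∑ T ∈ E.powersetCard j,
        (∏ e ∈ T, w e) * ((∑ a ∈ E \ T, w a) ^ 2 - ∑ a ∈ E \ T, w a ^ 2) := by
  have hcard : ∀ U ∈ E.powersetCard (j + 1),
      ((j : R) + 1) * ((∏ e ∈ U, w e) * ∑ a ∈ E \ U, w a) =
        ∑ b ∈ U, (∏ e ∈ U, w e) * ∑ a ∈ E \ U, w a := fun U hU => by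
    rw [sum_const, (mem_powersetCard.1 hU).2, nsmul_eq_mul]; push_cast; rfl
  rw [mul_sum, sum_congr rfl hcard, sum_powersetCard_succ_sum_mem]
  refine sum_congr rfl fun T _ => ?_
  have hsplit : ∀ b ∈ E \ T, ∑ a ∈ E \ insert b T, w a = ∑ a ∈ E \ T, w a - w b := by
    intro b hb
    rw [sdiff_insert, sum_erase_eq_sub hb]
  rw [sum_congr rfl fun b hb => by rw [prod_insert (mem_sdiff.1 hb).2, hsplit b hb], sq,
    sum_mul, ← sum_sub_distrib, mul_sum]
  refine sum_congr rfl fun b _ => ?_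
  ring

theorem sum_mul_sum_powersetCard_prod (j : ℕ) :
    (∑ e ∈ E, w e) * ∑ T ∈ E.powersetCard j, ∏ e ∈ T, w e =
      ∑ T ∈ E.powersetCard j, (∏ e ∈ T, w e) * ∑ a ∈ E \ T, w a +
        ∑ T ∈ E.powersetCard j, (∏ e ∈ T, w e) * ∑ a ∈ T, w a := by
  rw [mul_sum, ← sum_add_distrib]
  refine sum_congr rfl fun T hT => ?_
  rw [← mul_add, sum_sdiff (mem_powersetCard.1 hT).1, mul_comm]

end CommRing

variable (E : Finset α) {w : α → ℝ}

theorem mul_sum_powersetCard_prod_mul_sum_sdiff_le (hw : ∀ e ∈ E, 0 ≤ w e) (j : ℕ) :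
    j * ∑ T ∈ E.powersetCard j, (∏ e ∈ T, w e) * ∑ a ∈ E \ T, w a ≤
      (#E - j) * ∑ T ∈ E.powersetCard j, (∏ e ∈ T, w e) * ∑ a ∈ T, w a := by
  have hprod : ∀ T ⊆ E, 0 ≤ ∏ e ∈ T, w e := fun T hT =>
    prod_nonneg fun e he => hw e (hT he)
  rcases j with _ | i
  · simp only [CharP.cast_eq_zero, zero_mul, sub_zero]
    refine mul_nonneg (Nat.cast_nonneg _) (sum_nonneg fun T hT => ?_)
    have hTE := (mem_powersetCard.1 hT).1
    exact mul_nonneg (hprod T hTE) (sum_nonneg fun e he => hw e (hTE he))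
  push_cast
  rw [succ_mul_sum_powersetCard_succ_prod_mul_sum_sdiff, sum_powersetCard_succ_prod_mul_sum,
    mul_sum]
  refine sum_le_sum fun T hT => ?_
  obtain ⟨hTE, hTcard⟩ := mem_powersetCard.1 hT
  have hR : (#(E \ T) : ℝ) = #E - i := by
    rw [card_sdiff_of_subset hTE, Nat.cast_sub (hTcard ▸ card_le_card hTE), hTcard]
  have hcs := sq_sum_le_card_mul_sum_sq (s := E \ T) (f := w)
  rw [hR] at hcs
  rw [mul_left_comm]
  exact mul_le_mul_of_nonneg_left (by linarith) (hprod T hTE)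

theorem card_mul_succ_mul_sum_powersetCard_succ_prod_le (hw : ∀ e ∈ E, 0 ≤ w e) (j : ℕ) :
    #E * ((j + 1) * ∑ U ∈ E.powersetCard (j + 1), ∏ e ∈ U, w e) ≤
      (#E - j) * ((∑ e ∈ E, w e) * ∑ T ∈ E.powersetCard j, ∏ e ∈ T, w e) := by
  rw [succ_mul_sum_powersetCard_succ_prod, sum_mul_sum_powersetCard_prod]
  linear_combination mul_sum_powersetCard_prod_mul_sum_sdiff_le E hw j

/-- **Maclaurin's inequality** -/
theorem card_pow_mul_esymm_le (hw : ∀ e ∈ E, 0 ≤ w e) (j : ℕ) :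
    (#E : ℝ) ^ j * (E.val.map w).esymm j ≤ (#E).choose j * (∑ e ∈ E, w e) ^ j := by
  rw [esymm_map_val]
  induction j with
  | zero => simp
  | succ j ih =>
    have hsum : 0 ≤ ∑ e ∈ E, w e := sum_nonneg hw
    rcases lt_or_ge #E (j + 1) with hlt | hle
    · rw [powersetCard_eq_empty.2 hlt, sum_empty, mul_zero]
      positivity
    have hchoose : ((#E).choose (j + 1) : ℝ) * (j + 1) = (#E).choose j * (#E - j) := by
      rw [← Nat.cast_sub (by omega : j ≤ #E)]
      exact_mod_cast Nat.choose_succ_right_eq #E j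
    have hj : (0 : ℝ) ≤ #E - j := by
      rw [sub_nonneg]
      exact_mod_cast (by omega : j ≤ #E)
    refine le_of_mul_le_mul_right ?_ (by positivity : (0 : ℝ) < j + 1)
    calc (#E : ℝ) ^ (j + 1) * (∑ U ∈ E.powersetCard (j + 1), ∏ e ∈ U, w e) * (j + 1)
        = #E ^ j * (#E * ((j + 1) * ∑ U ∈ E.powersetCard (j + 1), ∏ e ∈ U, w e)) := by ring
      _ ≤ #E ^ j *
            ((#E - j) * ((∑ e ∈ E, w e) * ∑ T ∈ E.powersetCard j, ∏ e ∈ T, w e)) :=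
        mul_le_mul_of_nonneg_left
          (card_mul_succ_mul_sum_powersetCard_succ_prod_le E hw j) (by positivity)
      _ = (#E - j) * (∑ e ∈ E, w e) * (#E ^ j * ∑ T ∈ E.powersetCard j, ∏ e ∈ T, w e) :=
        by ring
      _ ≤ (#E - j) * (∑ e ∈ E, w e) * ((#E).choose j * (∑ e ∈ E, w e) ^ j) :=
        mul_le_mul_of_nonneg_left ih (by positivity)
      _ = (#E).choose (j + 1) * (∑ e ∈ E, w e) ^ (j + 1) * (j + 1) := by
        rw [mul_right_comm _ _ ((j : ℝ) + 1), hchoose]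
        ring

theorem sum_powersetCard_pow_card_inter_le {S : Finset α} (hS : S ⊆ E) {c : ℝ} (hc : 0 ≤ c)
    (j : ℕ) :
    ∑ A ∈ E.powersetCard j, c ^ #(A ∩ S) ≤
      (#E).choose j * Real.exp (-((1 - c) * j * #S / #E)) := by
  rcases E.eq_empty_or_nonempty with rfl | hE
  · rcases j with _ | j
    · simp
    · simp [powersetCard_eq_empty.2 (by simp : #(∅ : Finset α) < j + 1)]
  set w : α → ℝ := fun e => if e ∈ S then c else 1
  have hw : ∀ e ∈ E, 0 ≤ w e := fun e _ => by
    simp only [w]; split_ifs <;> linarith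
  have hprod : ∀ A : Finset α, ∏ e ∈ A, w e = c ^ #(A ∩ S) := fun A => by
    simp only [w, prod_ite_mem, prod_const]
  have hn : (0 : ℝ) < #E := by exact_mod_cast hE.card_pos
  have hmean : (∑ e ∈ E, w e) / #E = 1 - (1 - c) * #S / #E := by
    rw [← sum_sdiff hS, sum_congr rfl fun e he => if_neg (mem_sdiff.1 he).2,
      sum_congr rfl fun e he => if_pos he, sum_const, sum_const, nsmul_eq_mul, nsmul_eq_mul,
      card_sdiff_of_subset hS, Nat.cast_sub (card_le_card hS)]
    field_simp
    ring
  have hmean_le : (∑ e ∈ E, w e) / #E ≤ Real.exp (-((1 - c) * #S / #E)) := by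
    rw [hmean]
    linarith [Real.add_one_le_exp (-((1 - c) * #S / #E))]
  have hmaclaurin := card_pow_mul_esymm_le E hw j
  rw [esymm_map_val] at hmaclaurin
  simp_rw [hprod] at hmaclaurin
  calc ∑ A ∈ E.powersetCard j, c ^ #(A ∩ S)
      ≤ (#E).choose j * ((∑ e ∈ E, w e) / #E) ^ j := by
        rw [div_pow, ← mul_div_assoc, le_div_iff₀ (by positivity), mul_comm]
        exact hmaclaurin
    _ ≤ (#E).choose j * Real.exp (-((1 - c) * #S / #E)) ^ j := by
        gcongr
    _ = (#E).choose j * Real.exp (-((1 - c) * j * #S / #E)) := by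
        rw [← Real.exp_nat_mul]
        ring_nf

theorem mul_choose_mul_min_le_sum_powersetCard_min {S : Finset α} (hS : S ⊆ E) {ρ : ℝ}
    (hρ : 1 ≤ ρ) (j : ℕ) :
    (1 - Real.exp (-1)) * ((#E).choose j * min (j / #E * #S : ℝ) ρ) ≤
      ∑ A ∈ E.powersetCard j, min (#(A ∩ S) : ℝ) ρ := by
  have hρ0 : 0 < ρ := by linarith
  set u : ℝ := (1 - (1 - ρ⁻¹)) * j * #S / #E
  have hu : 0 ≤ u := by
    simp only [u, sub_sub_cancel]
    positivity
  have hmin : min (j / #E * #S : ℝ) ρ = ρ * min u 1 := by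
    rw [mul_min_of_nonneg _ _ hρ0.le, mul_one]
    congr 1
    simp only [u]
    field_simp
    ring
  calc (1 - Real.exp (-1)) * ((#E).choose j * min (j / #E * #S : ℝ) ρ)
      = (#E).choose j * ρ * ((1 - Real.exp (-1)) * min u 1) := by rw [hmin]; ring
    _ ≤ (#E).choose j * ρ * (1 - Real.exp (-u)) := by
        gcongr
        exact one_sub_exp_neg_one_mul_min_le hu
    _ = ρ * ((#E).choose j - (#E).choose j * Real.exp (-u)) := by ring
    _ ≤ ρ * ((#E).choose j - ∑ A ∈ E.powersetCard j, (1 - ρ⁻¹) ^ #(A ∩ S)) := by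
        gcongr
        exact sum_powersetCard_pow_card_inter_le E hS (by simp [inv_le_one_of_one_le₀ hρ]) j
    _ = ∑ A ∈ E.powersetCard j, ρ * (1 - (1 - ρ⁻¹) ^ #(A ∩ S)) := by
        rw [← mul_sum, sum_sub_distrib, sum_const, card_powersetCard, nsmul_one]
    _ ≤ ∑ A ∈ E.powersetCard j, min (#(A ∩ S) : ℝ) ρ :=
        sum_le_sum fun A _ => mul_one_sub_one_sub_inv_pow_le_min hρ _

end Finset

theorem exists_sum_range_min_eq {m ρ : ℕ → ℝ} {k : ℕ} {s : ℝ} (hs : 0 ≤ s)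
    (hρ : ∀ i < k, 0 < ρ i) (hdens : ∀ i l, i ≤ l → l < k → m l / ρ l ≤ m i / ρ i) :
    ∃ t ≤ k, ∑ i ∈ range k, min (s * m i) (ρ i) =
      ∑ i ∈ range t, ρ i + s * ∑ i ∈ Ico t k, m i := by
  classical
  have hsat_iff : ∀ i < k, ρ i ≤ s * m i ↔ 1 ≤ s * (m i / ρ i) := fun i hi => by
    rw [← mul_div_assoc, le_div_iff₀ (hρ i hi), one_mul]
  have hsat : ∀ i l, i ≤ l → l < k → ρ l ≤ s * m l → ρ i ≤ s * m i := by
    intro i l hil hlk hl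
    refine (hsat_iff i (hil.trans_lt hlk)).2 (((hsat_iff l hlk).1 hl).trans ?_)
    exact mul_le_mul_of_nonneg_left (hdens i l hil hlk) hs
  have hex : ∃ t, k ≤ t ∨ ¬ ρ t ≤ s * m t := ⟨k, Or.inl le_rfl⟩
  have htk : Nat.find hex ≤ k := Nat.find_min' hex (Or.inl le_rfl)
  refine ⟨Nat.find hex, htk, ?_⟩
  rw [range_eq_Ico, ← sum_Ico_consecutive _ (Nat.zero_le _) htk,
    ← range_eq_Ico, mul_sum]
  congr 1
  · refine sum_congr rfl fun i hi => min_eq_right ?_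
    exact not_not.1 (not_or.1 (Nat.find_min hex (mem_range.1 hi))).2
  · refine sum_congr rfl fun i hi => min_eq_left ?_
    obtain ⟨hti, hik⟩ := mem_Ico.1 hi
    rcases Nat.find_spec hex with h | h
    · omega
    · exact le_of_lt (not_le.1 fun hsat_i => h (hsat _ i hti hik hsat_i))

namespace FinMatroid

variable {α : Type*} [DecidableEq α] (M : FinMatroid α)

theorem r_le_r_add_card_sdiff (X Y : Finset α) : M.r X ≤ M.r Y + #(X \ Y) := by
  have hXY : X ⊆ Y ∪ X \ Y := by rw [union_sdiff_self_eq_union]; exact subset_union_right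
  linarith [M.r_mono hXY, M.r_submod Y (X \ Y), M.r_le_card (X \ Y)]

theorem sum_r_powersetCard_le (F : Finset α) {j : ℕ} (hj : 1 ≤ j) :
    ∑ A ∈ M.E.powersetCard j, (M.r A : ℝ) ≤
      (#M.E).choose j * (M.r F + j / #M.E * #(M.E \ F)) := by
  have hbound : ∑ A ∈ M.E.powersetCard j, M.r A ≤
      (#M.E).choose j * M.r F + #(M.E \ F) * (#M.E - 1).choose (j - 1) := by
    rw [← sum_powersetCard_card_inter sdiff_subset hj, ← card_powersetCard, ← smul_eq_mul,
      ← sum_const, ← sum_add_distrib]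
    refine sum_le_sum fun A hA => ?_
    have hAF : A \ F = A ∩ (M.E \ F) := by
      have := (mem_powersetCard.1 hA).1
      grind
    rw [← hAF]
    exact M.r_le_r_add_card_sdiff A F
  have hchoose : ((#(M.E \ F) * (#M.E - 1).choose (j - 1) : ℕ) : ℝ) =
      (#M.E).choose j * (j / #M.E * #(M.E \ F)) := by
    rcases (#M.E).eq_zero_or_pos with h | h
    · simp [card_eq_zero.1 h]
    have := congrArg (Nat.cast (R := ℝ)) (Nat.choose_pred_mul_eq #M.E hj)
    push_cast at this ⊢
    field_simp
    linear_combination (#(M.E \ F) : ℝ) * this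
  calc ∑ A ∈ M.E.powersetCard j, (M.r A : ℝ)
      ≤ (#M.E).choose j * M.r F + #(M.E \ F) * (#M.E - 1).choose (j - 1) := by
        exact_mod_cast hbound
    _ = (#M.E).choose j * (M.r F + j / #M.E * #(M.E \ F)) := by
        rw [mul_add, ← hchoose]
        push_cast
        ring

theorem exists_sum_range_min_eq_r_add {k : ℕ} {F : ℕ → Finset α} (hF0 : F 0 = ∅)
    (hFk : F k = M.E) (hchain : ∀ i < k, F i ⊆ F (i + 1))
    (hri : ∀ i < k, M.r (F i) < M.r (F (i + 1)))
    (hdens : ∀ i l, i ≤ l → l < k →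
      (#(F (l + 1) \ F l) : ℝ) / ((M.r (F (l + 1)) : ℝ) - M.r (F l)) ≤
        #(F (i + 1) \ F i) / ((M.r (F (i + 1)) : ℝ) - M.r (F i)))
    {s : ℝ} (hs : 0 ≤ s) :
    ∃ t ≤ k,
      ∑ i ∈ range k, min (s * #(F (i + 1) \ F i)) ((M.r (F (i + 1)) : ℝ) - M.r (F i)) =
        M.r (F t) + s * #(M.E \ F t) := by
  have hFmono : MonotoneOn F (Set.Iic k) :=
    monotoneOn_of_le_add_one Set.ordConnected_Iic fun i _ _ hi => hchain i hi
  obtain ⟨t, htk, hmin⟩ := exists_sum_range_min_eq hs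
    (fun i hi => sub_pos.2 (Nat.cast_lt.2 (hri i hi))) hdens
  refine ⟨t, htk, hmin.trans ?_⟩
  have hcard : ∀ i ∈ Ico t k, (#(F (i + 1) \ F i) : ℝ) = #(F (i + 1)) - #(F i) := by
    intro i hi
    have hsub := hchain i (mem_Ico.1 hi).2
    rw [card_sdiff_of_subset hsub, Nat.cast_sub (card_le_card hsub)]
  have hFt : F t ⊆ M.E := hFk ▸ hFmono htk (Set.mem_Iic.2 le_rfl) htk
  rw [sum_range_sub (fun i => (M.r (F i) : ℝ)), sum_congr rfl hcard,
    sum_Ico_sub (fun i => (#(F i) : ℝ)) htk, hF0, M.r_empty, hFk, card_sdiff_of_subset hFt,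
    Nat.cast_sub (card_le_card hFt), Nat.cast_zero, sub_zero]

end FinMatroid

theorem stmt8_general {α : Type*} [DecidableEq α] (M : FinMatroid α)
    (k : ℕ) (F : ℕ → Finset α)
    (hF0 : F 0 = ∅) (hFk : F k = M.E)
    (hchain : ∀ i < k, F i ⊂ F (i + 1))
    (hri : ∀ i < k, M.r (F i) < M.r (F (i + 1)))
    (lam : ℕ → ℝ)
    (hlam : ∀ i < k, lam (i + 1) =
      ((F (i + 1) \ F i).card : ℝ) / ((M.r (F (i + 1)) : ℝ) - (M.r (F i) : ℝ)))
    (hdec : ∀ i, 1 ≤ i → i < k → lam (i + 1) < lam i)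
    (j : ℕ) (hj1 : 1 ≤ j) :
    (1 - (Real.exp 1)⁻¹) * ∑ A ∈ M.E.powersetCard j, (M.r A : ℝ) ≤
      ∑ A ∈ M.E.powersetCard j, ∑ i ∈ Finset.range k,
        (min (A ∩ (F (i + 1) \ F i)).card (M.r (F (i + 1)) - M.r (F i)) : ℝ) := by
  have hFmono : MonotoneOn F (Set.Iic k) :=
    monotoneOn_of_le_add_one Set.ordConnected_Iic fun i _ _ hi => (hchain i hi).subset
  have hblock : ∀ i < k, F (i + 1) \ F i ⊆ M.E := fun i hi =>
    sdiff_subset.trans (hFk ▸ hFmono hi (Set.mem_Iic.2 le_rfl) hi)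
  have hlam_anti : AntitoneOn lam (Set.Icc 1 k) :=
    antitoneOn_of_add_one_le Set.ordConnected_Icc fun i _ hi hi' => (hdec i hi.1 hi'.2).le
  obtain ⟨t, -, hmin⟩ := M.exists_sum_range_min_eq_r_add hF0 hFk
    (fun i hi => (hchain i hi).subset) hri (fun i l hil hlk => by
      rw [← hlam l hlk, ← hlam i (by omega)]
      exact hlam_anti ⟨by omega, by omega⟩ ⟨by omega, by omega⟩ (by omega))
    (by positivity : (0 : ℝ) ≤ j / #M.E)
  have hρ : ∀ i < k, (1 : ℝ) ≤ M.r (F (i + 1)) - M.r (F i) := fun i hi => by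
    rw [le_sub_iff_add_le']
    exact_mod_cast hri i hi
  rw [← Real.exp_neg, sum_comm]
  calc (1 - Real.exp (-1)) * ∑ A ∈ M.E.powersetCard j, (M.r A : ℝ)
      ≤ (1 - Real.exp (-1)) * ((#M.E).choose j * (M.r (F t) + j / #M.E * #(M.E \ F t))) := by
        gcongr
        · linarith [Real.exp_le_one_iff.2 (by norm_num : (-1 : ℝ) ≤ 0)]
        · exact M.sum_r_powersetCard_le (F t) hj1
    _ = ∑ i ∈ range k, (1 - Real.exp (-1)) *
          ((#M.E).choose j *
            min (j / #M.E * #(F (i + 1) \ F i) : ℝ) ((M.r (F (i + 1)) : ℝ) - M.r (F i))) := by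
        rw [← mul_sum, ← mul_sum, hmin]
    _ ≤ _ := sum_le_sum fun i hi => mul_choose_mul_min_le_sum_powersetCard_min M.E
        (hblock i (mem_range.1 hi)) (hρ i (mem_range.1 hi)) j

/-- Let `∅ = F_0 ⊊ ⋯ ⊊ F_k = E` be a chain in a loopless matroid with
`E_i = F_i \ F_{i−1}`, `r_i = r(F_i) − r(F_{i−1}) ≥ 1` and strictly decreasing
densities `λ_i = |E_i|/r_i` with `λ_k ≥ 1`. Then for every `1 ≤ j ≤ n`, the sum
over all `j`-element subsets `A ⊆ E` of the partition-matroid rank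
`Σ_i min(|A ∩ E_i|, r_i)` is at least `(1 − 1/e)` times the sum over the same
subsets of `r(A)`. -/
theorem stmt8 {α : Type*} [DecidableEq α] (M : FinMatroid α) (hloop : M.Loopless)
    (n : ℕ) (hn : M.E.card = n)
    (k : ℕ) (hk : 1 ≤ k) (F : ℕ → Finset α)
    (hF0 : F 0 = ∅) (hFk : F k = M.E)
    (hchain : ∀ i < k, F i ⊂ F (i + 1))
    (hri : ∀ i < k, M.r (F i) < M.r (F (i + 1)))
    (lam : ℕ → ℝ)
    (hlam : ∀ i < k, lam (i + 1) =
      ((F (i + 1) \ F i).card : ℝ) / ((M.r (F (i + 1)) : ℝ) - (M.r (F i) : ℝ)))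
    (hdec : ∀ i, 1 ≤ i → i < k → lam (i + 1) < lam i)
    (hlast : 1 ≤ lam k)
    (j : ℕ) (hj1 : 1 ≤ j) (hjn : j ≤ n) :
    (1 - (Real.exp 1)⁻¹) * ∑ A ∈ M.E.powersetCard j, (M.r A : ℝ) ≤
      ∑ A ∈ M.E.powersetCard j, ∑ i ∈ Finset.range k,
        (min (A ∩ (F (i + 1) \ F i)).card (M.r (F (i + 1)) - M.r (F i)) : ℝ) :=
  stmt8_general M k F hF0 hFk hchain hri lam hlam hdec j hj1
end

section
/- Let G be a finite connected simple graph such that for every pair of edges e, f of G, the graph obtained from G by deleting e and f is still connected (i.e., G is 3-edge-connected). Then there exist three spanning trees T_1, T_2, T_3 of G such that the union of their complements covers all edges of G; equivalently, the edge sets of T_1, T_2 and T_3 have empty intersection: E(T_1) ∩ E(T_2) ∩ E(T_3) = ∅. -/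
/-!
Take forests `F₁, …, F_k` of `G` using every edge at most `m` times, of maximal total size (for
the theorem `k = 3` and `m = 2`, so no edge lies in all three forests). Call an edge *unsaturated*
if some sequence of exchanges `F_i ↦ F_i + e - g`, with `e` used fewer than `m` times, leads to a
family using it fewer than `m` times. In any family so reached, an edge used fewer than `m` times
has its endpoints joined in each `F_i` by unsaturated edges: if it is not in `F_i`, either it
closes no cycle there, and adding it contradicts maximality, or it can be exchanged against any
edge of the `F_i`-path between its endpoints, which then becomes unsaturated. Following the
exchanges back, every `F_i` of the maximal family spans each component of the graph `D` of
unsaturated edges. If `D` had `q ≥ 2` components, each forest would contain at most `q - 1` of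
the edges between them, all of which are saturated, while `c`-edge-connectivity of `G` provides at
least `c q / 2` such edges: `m c q / 2 ≤ k (q - 1)`, impossible once `2 k ≤ m c`. Hence `D` is
connected and every `F_i` is a spanning tree.
-/

open Finset Function SimpleGraph

theorem Fintype.sum_update_add {ι M : Type*} [Fintype ι] [DecidableEq ι] [AddCommMonoid M]
    (f : ι → M) (i : ι) (b : M) : ∑ j, update f i b j + f i = ∑ j, f j + b := by
  rw [sum_update_of_mem (mem_univ i), ← add_sum_erase _ f (mem_univ i),
    sdiff_singleton_eq_erase]
  abel

namespace SimpleGraph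

section Reachability

variable {V : Type*} {G H K : SimpleGraph V}

theorem Reachable.of_forall_adj (h : ∀ x y, H.Adj x y → K.Reachable x y) {u v : V}
    (huv : H.Reachable u v) : K.Reachable u v := by
  rw [reachable_iff_reflTransGen] at huv ⊢
  exact huv.lift' id fun x y hxy => (reachable_iff_reflTransGen x y).1 (h x y hxy)

theorem Reachable.of_sup_edge {a b u v : V} (h : (H ⊔ edge a b).Reachable u v) :
    H.Reachable u v ∨ (H.Reachable u a ∧ H.Reachable b v) ∨
      (H.Reachable u b ∧ H.Reachable a v) := by
  obtain ⟨w⟩ := h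
  induction w with
  | nil => exact Or.inl .rfl
  | @cons x y z hxy _ ih =>
    rw [sup_adj, edge_adj] at hxy
    rcases hxy with hxy | ⟨⟨rfl, rfl⟩ | ⟨rfl, rfl⟩, -⟩
    · have := hxy.reachable
      rcases ih with h | ⟨h₁, h₂⟩ | ⟨h₁, h₂⟩
      · exact Or.inl (this.trans h)
      · exact Or.inr (Or.inl ⟨this.trans h₁, h₂⟩)
      · exact Or.inr (Or.inr ⟨this.trans h₁, h₂⟩)
    · rcases ih with h | ⟨-, h⟩ | ⟨-, h⟩
      · exact Or.inr (Or.inl ⟨.rfl, h⟩)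
      · exact Or.inr (Or.inl ⟨.rfl, h⟩)
      · exact Or.inl h
    · rcases ih with h | ⟨-, h⟩ | ⟨-, h⟩
      · exact Or.inr (Or.inr ⟨.rfl, h⟩)
      · exact Or.inl h
      · exact Or.inr (Or.inr ⟨.rfl, h⟩)

theorem IsAcyclic.not_reachable_deleteEdges_of_mem_edges (hH : H.IsAcyclic) {u v : V}
    {p : H.Walk u v} (hp : p.IsPath) {g : Sym2 V} (hg : g ∈ p.edges) :
    ¬ (H.deleteEdges {g}).Reachable u v := by
  classical
  rintro ⟨q⟩
  have hpq := congrArg Subtype.val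
    ((hH.subsingleton_path u v).elim ⟨p, hp⟩ ⟨_, q.toPath.2.mapLe (deleteEdges_le {g})⟩)
  rw [← Subtype.coe_mk p hp, hpq, Walk.edges_mapLe_eq_edges] at hg
  simpa [edgeSet_deleteEdges] using Walk.edges_subset_edgeSet _ hg

theorem fromEdgeSet_insert (S : Set (Sym2 V)) (a b : V) :
    fromEdgeSet (insert s(a, b) S) = fromEdgeSet S ⊔ edge a b := by
  rw [edge, ← fromEdgeSet_union, Set.insert_eq, Set.union_comm]

theorem isAcyclic_fromEdgeSet_insert_erase [DecidableEq V] {S : Finset (Sym2 V)}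
    (hS : (fromEdgeSet (S : Set (Sym2 V))).IsAcyclic) {u v : V}
    {p : (fromEdgeSet (S : Set (Sym2 V))).Walk u v} (hp : p.IsPath) {g : Sym2 V}
    (hg : g ∈ p.edges) :
    (fromEdgeSet (↑(insert s(u, v) (S.erase g)) : Set (Sym2 V))).IsAcyclic := by
  rw [coe_insert, fromEdgeSet_insert, coe_erase, ← deleteEdges_fromEdgeSet]
  exact (hS.anti (deleteEdges_le _)).sup_edge_of_not_reachable
    (hS.not_reachable_deleteEdges_of_mem_edges hp hg)

theorem isDiag_map_connectedComponentMk_fromEdgeSet {S : Set (Sym2 V)} {e : Sym2 V}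
    (he : e ∈ S) : (e.map (fromEdgeSet S).connectedComponentMk).IsDiag := by
  induction e with | h a b => ?_
  rw [Sym2.map_mk, Sym2.mk_isDiag_iff]
  by_cases hab : a = b
  · rw [hab]
  · exact ConnectedComponent.sound ((fromEdgeSet_adj S).2 ⟨he, hab⟩).reachable

theorem card_connectedComponent_bot :
    Nat.card (⊥ : SimpleGraph V).ConnectedComponent = Nat.card V :=
  (Nat.card_eq_of_bijective _ ⟨fun _ _ h => reachable_bot.1 (ConnectedComponent.exact h),
    fun c => c.exists_rep⟩).symm

theorem isEdgeConnected_three_of_connected_deleteEdges (hconn : G.Connected)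
    (h : ∀ e ∈ G.edgeSet, ∀ f ∈ G.edgeSet, (G.deleteEdges {e, f}).Connected) :
    G.IsEdgeConnected 3 := by
  refine (isEdgeConnected_add_one two_ne_zero).2 fun e => isEdgeConnected_two.2 fun f => ?_
  rw [deleteEdges_deleteEdges, Set.singleton_union, deleteEdges_eq_inter_edgeSet]
  by_cases he : e ∈ G.edgeSet <;> by_cases hf : f ∈ G.edgeSet
  · simpa [Set.insert_inter_of_mem he, Set.singleton_inter_of_mem hf]
      using (h e he f hf).preconnected
  · simpa [Set.insert_inter_of_mem he, hf] using (h e he e he).preconnected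
  · simpa [Set.insert_inter_of_notMem he, hf] using (h f hf f hf).preconnected
  · simpa [Set.insert_inter_of_notMem he, hf] using hconn.preconnected

end Reachability

section ComponentCount

variable {V : Type*} [Finite V] {H : SimpleGraph V}

theorem card_connectedComponent_le_card_sup_edge_add_one (a b : V) :
    Nat.card H.ConnectedComponent ≤ Nat.card (H ⊔ edge a b).ConnectedComponent + 1 := by
  classical
  let φ := ConnectedComponent.map (Hom.ofLE (le_sup_left : H ≤ H ⊔ edge a b))
  -- only the component of `b` can be merged into another one
  let f : H.ConnectedComponent → Option (H ⊔ edge a b).ConnectedComponent :=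
    fun c => if c = H.connectedComponentMk b then none else some (φ c)
  have hf : Injective f := by
    intro c₁ c₂ hc
    induction c₁, c₂ using ConnectedComponent.ind₂ with | h u w => ?_
    by_cases h₁ : H.connectedComponentMk u = H.connectedComponentMk b <;>
      by_cases h₂ : H.connectedComponentMk w = H.connectedComponentMk b <;>
      simp only [f, h₁, h₂, if_true, if_false, reduceCtorEq, Option.some_inj] at hc
    · rw [h₁, h₂]
    · rcases (ConnectedComponent.exact hc).of_sup_edge with h | ⟨-, h⟩ | ⟨h, -⟩
      · exact ConnectedComponent.sound h
      · exact absurd (ConnectedComponent.sound h.symm) h₂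
      · exact absurd (ConnectedComponent.sound h) h₁
  exact (Nat.card_le_card_of_injective f hf).trans_eq Finite.card_option

theorem card_connectedComponent_sup_edge_add_one_le {a b : V} (hab : ¬ H.Reachable a b) :
    Nat.card (H ⊔ edge a b).ConnectedComponent + 1 ≤ Nat.card H.ConnectedComponent := by
  have hadj : (H ⊔ edge a b).Adj a b := by
    rw [sup_adj, edge_adj]
    exact Or.inr ⟨Or.inl ⟨rfl, rfl⟩, fun h => hab (h ▸ .rfl)⟩
  have := Fintype.ofFinite H.ConnectedComponent
  have := Fintype.ofFinite (H ⊔ edge a b).ConnectedComponent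
  rw [Nat.card_eq_fintype_card, Nat.card_eq_fintype_card, Nat.add_one_le_iff]
  refine Fintype.card_lt_of_surjective_not_injective _
    (ConnectedComponent.surjective_map_ofLE le_sup_left) fun hinj => hab ?_
  exact ConnectedComponent.exact (hinj (ConnectedComponent.sound hadj.reachable))

variable [DecidableEq V]

theorem card_le_card_connectedComponent_fromEdgeSet_add_card (S : Finset (Sym2 V)) :
    Nat.card V ≤ Nat.card (fromEdgeSet (S : Set (Sym2 V))).ConnectedComponent + #S := by
  induction S using Finset.induction_on with
  | empty => simp [card_connectedComponent_bot]
  | insert e S he ih =>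
    induction e with | h a b => ?_
    rw [coe_insert, fromEdgeSet_insert, card_insert_of_notMem he]
    have := card_connectedComponent_le_card_sup_edge_add_one (H := fromEdgeSet ↑S) a b
    omega

theorem IsAcyclic.card_connectedComponent_add_card_le {S : Finset (Sym2 V)}
    (hS : ∀ e ∈ S, ¬ e.IsDiag) (h : (fromEdgeSet (S : Set (Sym2 V))).IsAcyclic) :
    Nat.card (fromEdgeSet (S : Set (Sym2 V))).ConnectedComponent + #S ≤ Nat.card V := by
  induction S using Finset.induction_on with
  | empty => simp [card_connectedComponent_bot]
  | insert e S he ih =>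
    induction e with | h a b => ?_
    rw [coe_insert, fromEdgeSet_insert, isAcyclic_sup_fromEdgeSet_iff] at h
    have hab : a ≠ b := fun hab => hS _ (mem_insert_self _ _) (Sym2.mk_isDiag_iff.2 hab)
    have hnr : ¬ (fromEdgeSet (S : Set (Sym2 V))).Reachable a b := fun hr => by
      rcases h.2 hr with h' | h'
      · exact hab h'
      · exact he ((fromEdgeSet_adj _).1 h').1
    rw [coe_insert, fromEdgeSet_insert, card_insert_of_notMem he]
    have := card_connectedComponent_sup_edge_add_one_le hnr
    have := ih (fun e he => hS e (mem_insert_of_mem he)) h.1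
    omega

theorem card_sdiff_add_card_connectedComponent_le {S T : Finset (Sym2 V)} (hTS : T ⊆ S)
    (hS : ∀ e ∈ S, ¬ e.IsDiag) (h : (fromEdgeSet (S : Set (Sym2 V))).IsAcyclic) :
    #(S \ T) + Nat.card (fromEdgeSet (S : Set (Sym2 V))).ConnectedComponent ≤
      Nat.card (fromEdgeSet (T : Set (Sym2 V))).ConnectedComponent := by
  have := card_le_card_connectedComponent_fromEdgeSet_add_card T
  have := h.card_connectedComponent_add_card_le hS
  have := card_le_card hTS
  rw [card_sdiff_of_subset hTS]
  omega

theorem IsAcyclic.card_crossing_lt {C : Type*} [Finite C] [DecidableEq C] [Nonempty V]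
    {S : Finset (Sym2 V)} (hS : ∀ e ∈ S, ¬ e.IsDiag)
    (hacyc : (fromEdgeSet (S : Set (Sym2 V))).IsAcyclic) (π : V → C)
    (hconn : ∀ u v, π u = π v →
      (fromEdgeSet (↑{e ∈ S | (e.map π).IsDiag} : Set (Sym2 V))).Reachable u v) :
    #{e ∈ S | ¬ (e.map π).IsDiag} < Nat.card C := by
  set T : Finset (Sym2 V) := {e ∈ S | (e.map π).IsDiag}
  have hπ : ∀ v w, (fromEdgeSet (T : Set (Sym2 V))).Reachable v w → π v = π w := by
    rintro v w ⟨p⟩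
    induction p with
    | nil => rfl
    | cons h _ ih =>
      have := (mem_filter.1 ((fromEdgeSet_adj _).1 h).1).2
      rw [Sym2.map_mk, Sym2.mk_isDiag_iff] at this
      exact this.trans ih
  have hT : Nat.card (fromEdgeSet (T : Set (Sym2 V))).ConnectedComponent ≤ Nat.card C := by
    refine Nat.card_le_card_of_injective
      (ConnectedComponent.lift π fun v w p _ => hπ v w p.reachable) fun c₁ c₂ hc => ?_
    induction c₁, c₂ using ConnectedComponent.ind₂ with
    | h u v => exact ConnectedComponent.sound (hconn u v hc)
  have := card_sdiff_add_card_connectedComponent_le (T := T) (filter_subset _ S) hS hacyc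
  have : 0 < Nat.card (fromEdgeSet (S : Set (Sym2 V))).ConnectedComponent := Nat.card_pos
  rw [← filter_not] at *
  omega

end ComponentCount

section Cuts

variable {V : Type*} [Fintype V] {G : SimpleGraph V} [DecidableRel G.Adj] {k : ℕ}
  {C : Type*} [DecidableEq C]

theorem IsEdgeReachable.le_card_leaving {u v : V} (h : G.IsEdgeReachable k u v) (π : V → C)
    (huv : π u ≠ π v) :
    k ≤ #{e ∈ G.edgeFinset | ¬ (e.map π).IsDiag ∧ π u ∈ e.map π} := by
  by_contra! hlt
  obtain ⟨w⟩ := h (s := ↑{e ∈ G.edgeFinset | ¬ (e.map π).IsDiag ∧ π u ∈ e.map π})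
    (by rw [Set.encard_coe_eq_coe_finsetCard]; exact_mod_cast hlt)
  obtain ⟨d, -, hd₁, hd₂⟩ := w.exists_boundary_dart {x | π x = π u} rfl (Ne.symm huv)
  have hd := d.adj
  simp only [Set.mem_ofPred_eq] at hd₁ hd₂
  simp [hd₁, hd₂, Ne.symm hd₂] at hd

theorem IsEdgeConnected.card_mul_le_card_crossing [Fintype C] [Nontrivial C]
    (hG : G.IsEdgeConnected k) {π : V → C} (hπ : Surjective π) :
    Fintype.card C * k ≤ #{e ∈ G.edgeFinset | ¬ (e.map π).IsDiag} * 2 := by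
  refine card_mul_le_card_mul (fun c e => c ∈ e.map π) (fun c _ => ?_) (fun e _ => ?_)
  · obtain ⟨u, rfl⟩ := hπ c
    obtain ⟨c', hc'⟩ := exists_ne (π u)
    obtain ⟨v, rfl⟩ := hπ c'
    simpa [bipartiteAbove, filter_filter] using (hG u v).le_card_leaving π hc'.symm
  · induction e with | h a b => ?_
    calc #(univ.bipartiteBelow (fun c e => c ∈ e.map π) s(a, b)) ≤ #{π a, π b} :=
          card_le_card fun c => by simp [bipartiteBelow]
      _ ≤ 2 := card_le_two

end Cuts

section Packing

variable {V ι : Type*} [Fintype ι] [DecidableEq ι] {G : SimpleGraph V} {m : ℕ}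

def totalCard (F : ι → Finset (Sym2 V)) : ℕ := ∑ i, #(F i)

theorem totalCard_update_add (F : ι → Finset (Sym2 V)) (i : ι) (B : Finset (Sym2 V)) :
    totalCard (update F i B) + #(F i) = totalCard F + #B := by
  rw [totalCard, totalCard, ← Fintype.sum_update_add (fun j => #(F j)) i]
  congr 2
  ext j
  rcases eq_or_ne j i with rfl | hj <;> simp [*]

variable [DecidableEq V]

def edgeMult (F : ι → Finset (Sym2 V)) (e : Sym2 V) : ℕ := #{i | e ∈ F i}

theorem edgeMult_update_add (F : ι → Finset (Sym2 V)) (i : ι) (B : Finset (Sym2 V))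
    (e : Sym2 V) :
    edgeMult (update F i B) e + (if e ∈ F i then 1 else 0) =
      edgeMult F e + (if e ∈ B then 1 else 0) := by
  simp only [edgeMult, card_filter]
  rw [← Fintype.sum_update_add (fun j => if e ∈ F j then 1 else 0) i]
  congr 2
  ext j
  rcases eq_or_ne j i with rfl | hj <;> simp [*]

structure IsForestPacking (G : SimpleGraph V) (m : ℕ) (F : ι → Finset (Sym2 V)) : Prop where
  subset_edgeSet : ∀ i, (F i : Set (Sym2 V)) ⊆ G.edgeSet
  isAcyclic : ∀ i, (fromEdgeSet (F i : Set (Sym2 V))).IsAcyclic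
  edgeMult_le : ∀ e, edgeMult F e ≤ m

theorem IsForestPacking.update_insert {F : ι → Finset (Sym2 V)} (hF : IsForestPacking G m F)
    {i : ι} {e : Sym2 V} {B : Finset (Sym2 V)} (he : e ∈ G.edgeSet) (hem : edgeMult F e < m)
    (hB : B ⊆ F i) (hacyc : (fromEdgeSet (↑(insert e B) : Set (Sym2 V))).IsAcyclic) :
    IsForestPacking G m (update F i (insert e B)) where
  subset_edgeSet j := by
    rcases eq_or_ne j i with rfl | hj
    · rw [update_self, coe_insert]
      exact Set.insert_subset he ((coe_subset.2 hB).trans (hF.subset_edgeSet j))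
    · rw [update_of_ne hj]
      exact hF.subset_edgeSet j
  isAcyclic j := by
    rcases eq_or_ne j i with rfl | hj
    · rwa [update_self]
    · rw [update_of_ne hj]
      exact hF.isAcyclic j
  edgeMult_le x := by
    have h := edgeMult_update_add F i (insert e B) x
    have := hF.edgeMult_le x
    rcases eq_or_ne x e with rfl | hx
    · rw [if_pos (mem_insert_self x B)] at h
      split_ifs at h <;> omega
    · have hle : (if x ∈ insert e B then 1 else 0) ≤ if x ∈ F i then 1 else 0 := by
        simp only [mem_insert, hx, false_or]
        split_ifs with h₁ h₂ <;> first | omega | exact absurd (hB h₁) h₂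
      omega

def ExchangeStep (G : SimpleGraph V) (m : ℕ) (F F' : ι → Finset (Sym2 V)) : Prop :=
  ∃ i e g, e ∈ G.edgeSet ∧ edgeMult F e < m ∧ e ∉ F i ∧ g ∈ F i ∧
    (fromEdgeSet (↑(insert e ((F i).erase g)) : Set (Sym2 V))).IsAcyclic ∧
    F' = update F i (insert e ((F i).erase g))

section Exchange

variable {F F' : ι → Finset (Sym2 V)}

theorem IsForestPacking.of_exchangeStep (hF : IsForestPacking G m F)
    (h : ExchangeStep G m F F') : IsForestPacking G m F' := by
  obtain ⟨i, e, g, he, hem, -, -, hacyc, rfl⟩ := h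
  exact hF.update_insert he hem (erase_subset g (F i)) hacyc

theorem ExchangeStep.totalCard_eq (h : ExchangeStep G m F F') : totalCard F' = totalCard F := by
  obtain ⟨i, e, g, -, -, heF, hgF, -, rfl⟩ := h
  have := totalCard_update_add F i (insert e ((F i).erase g))
  rw [card_insert_of_notMem fun h => heF (mem_of_mem_erase h), card_erase_of_mem hgF] at this
  have := card_pos.2 ⟨g, hgF⟩
  omega

theorem IsForestPacking.of_reflTransGen (hF : IsForestPacking G m F)
    (h : Relation.ReflTransGen (ExchangeStep G m) F F') : IsForestPacking G m F' := by
  induction h with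
  | refl => exact hF
  | tail _ hstep ih => exact ih.of_exchangeStep hstep

theorem totalCard_eq_of_reflTransGen (h : Relation.ReflTransGen (ExchangeStep G m) F F') :
    totalCard F' = totalCard F := by
  induction h with
  | refl => rfl
  | tail _ hstep ih => rw [hstep.totalCard_eq, ih]

end Exchange

variable [Fintype V]

open Classical in
noncomputable def unsaturatedEdges (G : SimpleGraph V) (m : ℕ) (F₀ : ι → Finset (Sym2 V)) :
    Finset (Sym2 V) :=
  {f | f ∈ G.edgeSet ∧
    ∃ F, Relation.ReflTransGen (ExchangeStep G m) F₀ F ∧ edgeMult F f < m}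

section Closure

variable {F₀ F F' : ι → Finset (Sym2 V)}

theorem mem_unsaturatedEdges {f : Sym2 V} :
    f ∈ unsaturatedEdges G m F₀ ↔
      f ∈ G.edgeSet ∧
        ∃ F, Relation.ReflTransGen (ExchangeStep G m) F₀ F ∧ edgeMult F f < m := by
  simp [unsaturatedEdges]

theorem reachable_inter_unsaturatedEdges_of_edgeMult_lt
    (hF₀ : MaximalFor (IsForestPacking G m) totalCard F₀)
    (hF : Relation.ReflTransGen (ExchangeStep G m) F₀ F) {u v : V} (he : s(u, v) ∈ G.edgeSet)
    (hem : edgeMult F s(u, v) < m) (i : ι) :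
    (fromEdgeSet (↑(F i ∩ unsaturatedEdges G m F₀) : Set (Sym2 V))).Reachable u v := by
  have hFp := hF₀.prop.of_reflTransGen hF
  have huv : u ≠ v := G.ne_of_adj he
  by_cases hin : s(u, v) ∈ F i
  · refine ((fromEdgeSet_adj _).2 ⟨?_, huv⟩).reachable
    exact mem_coe.2 (mem_inter.2 ⟨hin, mem_unsaturatedEdges.2 ⟨he, F, hF, hem⟩⟩)
  by_cases hr : (fromEdgeSet (F i : Set (Sym2 V))).Reachable u v
  · -- exchanging `s(u, v)` against any edge `g` of the forest path from `u` to `v` is a step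
    -- after which `g` is used fewer than `m` times
    obtain ⟨p, hp⟩ := hr.exists_isPath
    refine ⟨p.transfer _ fun g hg => ?_⟩
    have hgF : g ∈ F i := (by simpa using Walk.edges_subset_edgeSet _ hg : g ∈ F i ∧ _).1
    have hgne : g ≠ s(u, v) := fun h => hin (h ▸ hgF)
    have hstep : ExchangeStep G m F (update F i (insert s(u, v) ((F i).erase g))) :=
      ⟨i, _, g, he, hem, hin, hgF,
        isAcyclic_fromEdgeSet_insert_erase (hFp.isAcyclic i) hp hg, rfl⟩
    have hgm : edgeMult (update F i (insert s(u, v) ((F i).erase g))) g < m := by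
      have h := edgeMult_update_add F i (insert s(u, v) ((F i).erase g)) g
      have := hFp.edgeMult_le g
      simp only [hgF, mem_insert, hgne, mem_erase, ne_eq, not_true_eq_false, false_and,
        or_self, if_true, if_false] at h
      omega
    have hgD : g ∈ unsaturatedEdges G m F₀ :=
      mem_unsaturatedEdges.2 ⟨hFp.subset_edgeSet i hgF, _, hF.tail hstep, hgm⟩
    simpa [hgF, hgD] using G.not_isDiag_of_mem_edgeSet (hFp.subset_edgeSet i hgF)
  · -- otherwise `s(u, v)` could be added to the `i`-th forest, contradicting maximality
    exfalso
    have hacyc : (fromEdgeSet (↑(insert s(u, v) (F i)) : Set (Sym2 V))).IsAcyclic := by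
      rw [coe_insert, fromEdgeSet_insert]
      exact (hFp.isAcyclic i).sup_edge_of_not_reachable hr
    have hF' := hFp.update_insert he hem Subset.rfl hacyc
    have h := totalCard_update_add F i (insert s(u, v) (F i))
    rw [card_insert_of_notMem hin, totalCard_eq_of_reflTransGen hF] at h
    have := hF₀.2 hF' (by omega)
    omega

theorem ExchangeStep.reachable_of_adj (hF₀ : MaximalFor (IsForestPacking G m) totalCard F₀)
    (hF : Relation.ReflTransGen (ExchangeStep G m) F₀ F) (h : ExchangeStep G m F F') {i : ι}
    {x y : V}
    (hxy : (fromEdgeSet (↑(F' i ∩ unsaturatedEdges G m F₀) : Set (Sym2 V))).Adj x y) :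
    (fromEdgeSet (↑(F i ∩ unsaturatedEdges G m F₀) : Set (Sym2 V))).Reachable x y := by
  obtain ⟨j, e, g, he, hem, -, -, -, rfl⟩ := h
  obtain ⟨hxyD, hne⟩ := (fromEdgeSet_adj _).1 hxy
  rw [mem_coe, mem_inter] at hxyD
  rcases eq_or_ne i j with rfl | hij
  · rw [update_self, mem_insert] at hxyD
    rcases hxyD with ⟨rfl | hxyF, hxyD⟩
    · exact reachable_inter_unsaturatedEdges_of_edgeMult_lt hF₀ hF he hem i
    · refine ((fromEdgeSet_adj _).2 ⟨?_, hne⟩).reachable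
      exact mem_coe.2 (mem_inter.2 ⟨mem_of_mem_erase hxyF, hxyD⟩)
  · rw [update_of_ne hij] at hxyD
    exact ((fromEdgeSet_adj _).2 ⟨mem_coe.2 (mem_inter.2 hxyD), hne⟩).reachable

theorem reachable_inter_unsaturatedEdges_of_reflTransGen
    (hF₀ : MaximalFor (IsForestPacking G m) totalCard F₀)
    (hF : Relation.ReflTransGen (ExchangeStep G m) F₀ F)
    (hFF' : Relation.ReflTransGen (ExchangeStep G m) F F') (i : ι) {x y : V}
    (h : (fromEdgeSet (↑(F' i ∩ unsaturatedEdges G m F₀) : Set (Sym2 V))).Reachable x y) :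
    (fromEdgeSet (↑(F i ∩ unsaturatedEdges G m F₀) : Set (Sym2 V))).Reachable x y := by
  induction hFF' using Relation.ReflTransGen.head_induction_on generalizing x y with
  | refl => exact h
  | head hstep _ ih =>
    exact (ih (hF.tail hstep) h).of_forall_adj fun a b hab => hstep.reachable_of_adj hF₀ hF hab

theorem reachable_inter_unsaturatedEdges (hF₀ : MaximalFor (IsForestPacking G m) totalCard F₀)
    (i : ι) {x y : V}
    (h : (fromEdgeSet (unsaturatedEdges G m F₀ : Set (Sym2 V))).Reachable x y) :
    (fromEdgeSet (↑(F₀ i ∩ unsaturatedEdges G m F₀) : Set (Sym2 V))).Reachable x y := by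
  refine h.of_forall_adj fun a b hab => ?_
  obtain ⟨he, F, hF, hem⟩ := mem_unsaturatedEdges.1 ((fromEdgeSet_adj _).1 hab).1
  exact reachable_inter_unsaturatedEdges_of_reflTransGen hF₀ .refl hF i
    (reachable_inter_unsaturatedEdges_of_edgeMult_lt hF₀ hF he hem i)

end Closure

section Main

variable {k : ℕ} {F₀ : ι → Finset (Sym2 V)}

theorem le_edgeMult_of_not_isDiag {e : Sym2 V} (he : e ∈ G.edgeSet)
    (hcross : ¬ (e.map
      (fromEdgeSet (unsaturatedEdges G m F₀ : Set (Sym2 V))).connectedComponentMk).IsDiag) :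
    m ≤ edgeMult F₀ e := by
  by_contra! hlt
  exact hcross (isDiag_map_connectedComponentMk_fromEdgeSet
    (mem_coe.2 (mem_unsaturatedEdges.2 ⟨he, F₀, .refl, hlt⟩)))

theorem card_crossing_lt_of_maximalFor [Nonempty V]
    [DecidableEq (fromEdgeSet (unsaturatedEdges G m F₀ : Set (Sym2 V))).ConnectedComponent]
    (hF₀ : MaximalFor (IsForestPacking G m) totalCard F₀) (i : ι) :
    #{e ∈ F₀ i | ¬ (e.map
        (fromEdgeSet (unsaturatedEdges G m F₀ : Set (Sym2 V))).connectedComponentMk).IsDiag} <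
      Nat.card (fromEdgeSet (unsaturatedEdges G m F₀ : Set (Sym2 V))).ConnectedComponent := by
  set π := (fromEdgeSet (unsaturatedEdges G m F₀ : Set (Sym2 V))).connectedComponentMk
  have hD : F₀ i ∩ unsaturatedEdges G m F₀ ⊆ {e ∈ F₀ i | (e.map π).IsDiag} :=
    fun e he => mem_filter.2 ⟨(mem_inter.1 he).1,
      isDiag_map_connectedComponentMk_fromEdgeSet (mem_coe.2 (mem_inter.1 he).2)⟩
  refine (hF₀.prop.isAcyclic i).card_crossing_lt
    (fun e he => G.not_isDiag_of_mem_edgeSet (hF₀.prop.subset_edgeSet i he)) π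
    fun u v huv => ?_
  exact (reachable_inter_unsaturatedEdges hF₀ i (ConnectedComponent.exact huv)).mono
    (fromEdgeSet_mono (coe_subset.2 hD))

theorem preconnected_fromEdgeSet_unsaturatedEdges [Nonempty V] [Nonempty ι]
    (hG : G.IsEdgeConnected k) (hkm : 2 * Fintype.card ι ≤ m * k)
    (hF₀ : MaximalFor (IsForestPacking G m) totalCard F₀) :
    (fromEdgeSet (unsaturatedEdges G m F₀ : Set (Sym2 V))).Preconnected := by
  classical
  set K := fromEdgeSet (unsaturatedEdges G m F₀ : Set (Sym2 V))
  set π := K.connectedComponentMk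
  by_contra hK
  have : Nontrivial K.ConnectedComponent := by
    obtain ⟨u, v, huv⟩ : ∃ u v, ¬ K.Reachable u v := by simpa [Preconnected] using hK
    exact ⟨_, _, fun h => huv (ConnectedComponent.exact h)⟩
  obtain ⟨q, hq⟩ :=
    Nat.exists_eq_succ_of_ne_zero (Fintype.card_ne_zero (α := K.ConnectedComponent))
  have hcut := hG.card_mul_le_card_crossing (π := π) fun c => c.exists_rep
  have hpack : #{e ∈ G.edgeFinset | ¬ (e.map π).IsDiag} * m ≤ Fintype.card ι * q := by
    refine card_mul_le_card_mul' (fun i e => e ∈ F₀ i) (fun e he => ?_) (fun i _ => ?_)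
    · rw [mem_filter, mem_edgeFinset] at he
      simpa [bipartiteBelow, edgeMult] using le_edgeMult_of_not_isDiag he.1 he.2
    · have := card_crossing_lt_of_maximalFor hF₀ i
      rw [Nat.card_eq_fintype_card, hq] at this
      calc _ ≤ #{e ∈ F₀ i | ¬ (e.map π).IsDiag} :=
            card_le_card fun e he => by simp_all [bipartiteAbove]
        _ ≤ q := Nat.le_of_lt_succ this
  rw [hq] at hcut
  have := Fintype.card_pos (α := ι)
  nlinarith [Nat.mul_le_mul_right m hcut, Nat.mul_le_mul_right (q + 1) hkm]

theorem IsEdgeConnected.exists_isForestPacking_connected [Nonempty V]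
    (hG : G.IsEdgeConnected k) (hkm : 2 * Fintype.card ι ≤ m * k) :
    ∃ F : ι → Finset (Sym2 V),
      IsForestPacking G m F ∧ ∀ i, (fromEdgeSet (F i : Set (Sym2 V))).Connected := by
  obtain ⟨F₀, hF₀⟩ := (Set.toFinite {F : ι → Finset (Sym2 V) | IsForestPacking G m F}
    ).exists_maximalFor totalCard _
    ⟨fun _ => ∅, ⟨fun _ => by simp, fun _ => by simp, fun _ => by simp [edgeMult]⟩⟩
  refine ⟨F₀, hF₀.prop, fun i => Connected.mk fun u v => ?_⟩
  have : Nonempty ι := ⟨i⟩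
  refine (reachable_inter_unsaturatedEdges hF₀ i
    (preconnected_fromEdgeSet_unsaturatedEdges hG hkm hF₀ u v)).mono (fromEdgeSet_mono ?_)
  exact coe_subset.2 inter_subset_left

end Main

end Packing

end SimpleGraph

/-- In a finite 3-edge-connected simple graph (connected, and still connected after
deleting any two edges) there are three spanning trees `T₁, T₂, T₃` whose complements
cover all edges; equivalently, their edge sets have empty intersection. -/
theorem stmt11 {V : Type*} [Fintype V] [DecidableEq V] (G : SimpleGraph V)
    (hconn : G.Connected)
    (h3ec : ∀ e ∈ G.edgeSet, ∀ f ∈ G.edgeSet, (G.deleteEdges {e, f}).Connected) :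
    ∃ T₁ T₂ T₃ : SimpleGraph V,
      T₁ ≤ G ∧ T₂ ≤ G ∧ T₃ ≤ G ∧
      T₁.IsTree ∧ T₂.IsTree ∧ T₃.IsTree ∧
      T₁.edgeSet ∩ T₂.edgeSet ∩ T₃.edgeSet = ∅ := by
  have := hconn.nonempty
  obtain ⟨F, hF, hFconn⟩ := (isEdgeConnected_three_of_connected_deleteEdges hconn h3ec
    ).exists_isForestPacking_connected (ι := Fin 3) (m := 2) (by simp)
  have hle (i : Fin 3) : fromEdgeSet (F i : Set (Sym2 V)) ≤ G :=
    (fromEdgeSet_le (G := G)).2 (Set.sdiff_subset.trans (hF.subset_edgeSet i))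
  refine ⟨_, _, _, hle 0, hle 1, hle 2, ⟨hFconn 0, hF.isAcyclic 0⟩,
    ⟨hFconn 1, hF.isAcyclic 1⟩, ⟨hFconn 2, hF.isAcyclic 2⟩,
    Set.eq_empty_of_forall_notMem fun e he => ?_⟩
  simp only [Set.mem_inter_iff, edgeSet_fromEdgeSet, Set.mem_sdiff, mem_coe] at he
  have := hF.edgeMult_le e
  rw [edgeMult, filter_true_of_mem fun i _ => by fin_cases i <;> simp [he]] at this
  simp at this
end

section
/- Let M be a loopless matroid on a nonempty finite ground set E with rank function r, and let γ = γ(M) be its density, the maximum over nonempty X ⊆ E of |X| / r(X). Then there exist finitely many independent sets I_1, …, I_m of M and nonnegative reals λ_1, …, λ_m with Σ_{t=1}^m λ_t = 1 such that for every element e ∈ E, Σ_{t : e ∈ I_t} λ_t = 1/γ. (That is, the vector with all coordinates equal to 1/γ(M) is a convex combination of indicator vectors of independent sets of M.) -/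
open Finset

section Layer

variable {α : Type*}

noncomputable def layer {k : ℕ} (A : Finset (α × Fin k)) (j : Fin k) : Finset α :=
  A.preimage (·, j) (Prod.mk_left_injective j).injOn

@[simp]
theorem mem_layer {k : ℕ} {A : Finset (α × Fin k)} {j : Fin k} {x : α} :
    x ∈ layer A j ↔ (x, j) ∈ A :=
  mem_preimage

theorem sum_card_layer {k : ℕ} (A : Finset (α × Fin k)) : ∑ j, #(layer A j) = #A := by
  rw [card_eq_sum_card_fiberwise (f := Prod.snd) (t := univ) fun _ _ => mem_coe.2 (mem_univ _)]
  refine sum_congr rfl fun j _ => ?_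
  rw [← card_map ⟨(·, j), Prod.mk_left_injective j⟩]
  congr 1
  ext ⟨x, i⟩
  simp only [mem_map, mem_layer, Function.Embedding.coeFn_mk, Prod.mk.injEq, mem_filter]
  grind

end Layer

structure IsRankFunction {α : Type*} [DecidableEq α] (r : Finset α → ℕ) : Prop where
  zero : r ∅ = 0
  le_card : ∀ X, r X ≤ #X
  mono : Monotone r
  submod : ∀ X Y, r (X ∪ Y) + r (X ∩ Y) ≤ r X + r Y

section RankFunction

variable {α : Type*} [DecidableEq α] {r r₁ r₂ : Finset α → ℕ}

theorem isRankFunction_card : IsRankFunction (fun X : Finset α => #X) :=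
  ⟨card_empty, fun _ => le_rfl, fun _ _ => card_le_card,
    fun X Y => (card_union_add_card_inter X Y).le⟩

namespace IsRankFunction

theorem insert_le (hr : IsRankFunction r) (e : α) (X : Finset α) :
    r (insert e X) ≤ r X + r {e} := by
  have := hr.submod X {e}
  rw [union_singleton] at this
  omega

theorem singleton_le_insert (hr : IsRankFunction r) (e : α) (X : Finset α) :
    r {e} ≤ r (insert e X) :=
  hr.mono (singleton_subset_iff.mpr (mem_insert_self e X))

theorem comp_image {β : Type*} [DecidableEq β] (hr : IsRankFunction r) (f : β → α) :
    IsRankFunction (fun X => r (X.image f)) where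
  zero := by simpa using hr.zero
  le_card X := (hr.le_card _).trans card_image_le
  mono _ _ h := hr.mono (image_subset_image h)
  submod X Y := by
    have := hr.mono (image_inter_subset f X Y)
    have := hr.submod (X.image f) (Y.image f)
    simp only [image_union]
    omega

theorem injOn_of_comp_image_eq_card {β : Type*} (hr : IsRankFunction r) {f : β → α} {X : Finset β}
    (h : r (X.image f) = #X) : Set.InjOn f X ∧ r (X.image f) = #(X.image f) := by
  have := hr.le_card (X.image f)
  have := card_image_le (s := X) (f := f)
  exact ⟨card_image_iff.mp (by omega), by omega⟩

theorem contract (hr : IsRankFunction r) (e : α) :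
    IsRankFunction (fun X => r (insert e X) - r {e}) where
  zero := by simp
  le_card X := by
    have := hr.insert_le e X
    have := hr.le_card X
    omega
  mono _ _ h := Nat.sub_le_sub_right (hr.mono (insert_subset_insert e h)) _
  submod X Y := by
    have h := hr.submod (insert e X) (insert e Y)
    rw [← insert_union_distrib, ← insert_inter_distrib] at h
    have := hr.singleton_le_insert e (X ∪ Y)
    have := hr.singleton_le_insert e (X ∩ Y)
    omega

/-- If deleting `e` breaks the min-max condition, the condition holds with one to spare on sets
containing `e`, so that `e` can be contracted. -/
theorem lt_add_of_not_delete (hr₁ : IsRankFunction r₁) (hr₂ : IsRankFunction r₂)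
    {E A B : Finset α} {e : α} {n : ℕ} (he : e ∉ E)
    (hmin : ∀ A ⊆ insert e E, n ≤ r₁ A + r₂ (insert e E \ A))
    (hA : A ⊆ E) (hAn : r₁ A + r₂ (E \ A) < n) (hB : B ⊆ E) :
    n < r₁ (insert e B) + r₂ (insert e E \ B) := by
  have heA : e ∉ A := fun h => he (hA h)
  have heB : e ∉ B := fun h => he (hB h)
  have h₁ := hr₁.submod A (insert e B)
  rw [union_insert, inter_insert_of_notMem heA] at h₁
  have h₂ := hr₂.submod (E \ A) (insert e E \ B)
  have hunion : E \ A ∪ (insert e E \ B) = insert e E \ (A ∩ B) := by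
    ext x; simp only [mem_union, mem_sdiff, mem_insert, mem_inter]; grind
  have hinter : E \ A ∩ (insert e E \ B) = insert e E \ insert e (A ∪ B) := by
    ext x; simp only [mem_inter, mem_sdiff, mem_insert, mem_union]; grind
  rw [hunion, hinter] at h₂
  have := hmin (A ∩ B) (inter_subset_left.trans (hA.trans (subset_insert e E)))
  have := hmin (insert e (A ∪ B)) (insert_subset_insert e (union_subset hA hB))
  omega

/-- Edmonds' matroid intersection theorem. -/
theorem exists_common_indep (hr₁ : IsRankFunction r₁) (hr₂ : IsRankFunction r₂)
    (E : Finset α) (n : ℕ) (hmin : ∀ A ⊆ E, n ≤ r₁ A + r₂ (E \ A)) :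
    ∃ S ⊆ E, r₁ S = #S ∧ r₂ S = #S ∧ n ≤ #S := by
  induction E using Finset.induction_on generalizing r₁ r₂ n with
  | empty => exact ⟨∅, subset_rfl, hr₁.zero, hr₂.zero, by simpa [hr₁.zero, hr₂.zero] using hmin ∅⟩
  | @insert e E he ih =>
    by_cases hdel : ∀ A ⊆ E, n ≤ r₁ A + r₂ (E \ A)
    · obtain ⟨S, hSE, hS⟩ := ih hr₁ hr₂ n hdel
      exact ⟨S, hSE.trans (subset_insert e E), hS⟩
    push Not at hdel
    obtain ⟨A, hAE, hAn⟩ := hdel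
    have hspare := fun B (hB : B ⊆ E) => hr₁.lt_add_of_not_delete hr₂ he hmin hAE hAn hB
    have hloops : r₁ {e} = 1 ∧ r₂ {e} = 1 := by
      have h := hspare A hAE
      rw [insert_sdiff_of_notMem E (fun h => he (hAE h))] at h
      have := hr₁.insert_le e A
      have := hr₂.insert_le e (E \ A)
      have := (hr₁.le_card {e}).trans_eq (card_singleton e)
      have := (hr₂.le_card {e}).trans_eq (card_singleton e)
      omega
    obtain ⟨S, hSE, hS₁, hS₂, hnS⟩ := ih (hr₁.contract e) (hr₂.contract e) (n - 1) fun B hB => by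
      have := hspare B hB
      rw [insert_sdiff_of_notMem E (fun h => he (hB h))] at this
      omega
    have heS : e ∉ S := fun h => he (hSE h)
    refine ⟨insert e S, insert_subset_insert e hSE, ?_, ?_, ?_⟩ <;>
      rw [card_insert_of_notMem heS]
    · have := hr₁.singleton_le_insert e S
      omega
    · have := hr₂.singleton_le_insert e S
      omega
    · omega

/-- The direct sum of `k` copies of a matroid, on ground set `α × Fin k`. -/
theorem sum_layer (hr : IsRankFunction r) (k : ℕ) :
    IsRankFunction (fun A : Finset (α × Fin k) => ∑ j, r (layer A j)) where
  zero := by simp [layer, hr.zero]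
  le_card A := (sum_le_sum fun j _ => hr.le_card _).trans_eq (sum_card_layer A)
  mono A B h := sum_le_sum fun j _ => hr.mono fun x hx => mem_layer.2 (h (mem_layer.1 hx))
  submod A B := by
    rw [← sum_add_distrib, ← sum_add_distrib]
    refine sum_le_sum fun j _ => ?_
    have hunion : layer (A ∪ B) j = layer A j ∪ layer B j := by ext; simp
    have hinter : layer (A ∩ B) j = layer A j ∩ layer B j := by ext; simp
    rw [hunion, hinter]
    exact hr.submod _ _

theorem card_le_sum_layer_add (hr : IsRankFunction r) {E : Finset α} {k : ℕ}
    (hE : ∀ X ⊆ E, #X ≤ k * r X) (A : Finset (α × Fin k)) :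
    #E ≤ ∑ j, r (layer A j) + #((E ×ˢ univ \ A).image Prod.fst) := by
  set Y := {x ∈ E | ∀ j, (x, j) ∈ A}
  have hYE : Y ⊆ E := filter_subset _ _
  have hY : k * r Y ≤ ∑ j, r (layer A j) := by
    calc k * r Y = ∑ _j : Fin k, r Y := by simp
      _ ≤ _ := sum_le_sum fun j _ => hr.mono fun x hx => mem_layer.2 ((mem_filter.1 hx).2 j)
  have hEY : E \ Y ⊆ (E ×ˢ univ \ A).image Prod.fst := by
    intro x hx
    simp only [Y, mem_sdiff, mem_filter, not_and, not_forall] at hx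
    obtain ⟨j, hj⟩ := hx.2 hx.1
    exact mem_image.2 ⟨(x, j), mem_sdiff.2 ⟨mem_product.2 ⟨hx.1, mem_univ j⟩, hj⟩, rfl⟩
  have := card_le_card hEY
  have := card_sdiff_of_subset hYE
  have := card_le_card hYE
  have := hE Y hYE
  omega

/-- Nash-Williams' covering theorem, via matroid intersection of `k` copies of the matroid with
the partition matroid of the fibres of `Prod.fst`. -/
theorem exists_partition_indep (hr : IsRankFunction r) (E : Finset α) (k : ℕ)
    (hE : ∀ X ⊆ E, #X ≤ k * r X) :
    ∃ I : Fin k → Finset α, (∀ j, I j ⊆ E ∧ r (I j) = #(I j)) ∧ ∀ x ∈ E, ∃! j, x ∈ I j := by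
  obtain ⟨S, hSE, hS₁, hS₂, hES⟩ :=
    (hr.sum_layer k).exists_common_indep (isRankFunction_card.comp_image Prod.fst) (E ×ˢ univ)
      #E fun A _ => hr.card_le_sum_layer_add hE A
  have hfstE : S.image Prod.fst ⊆ E := fun x hx => by
    obtain ⟨p, hp, rfl⟩ := mem_image.1 hx
    exact (mem_product.1 (hSE hp)).1
  have hinj : Set.InjOn Prod.fst (S : Set (α × Fin k)) := card_image_iff.1 hS₂
  have himage : S.image Prod.fst = E := eq_of_subset_of_card_le hfstE (by omega)
  have hlayer : ∀ j, r (layer S j) = #(layer S j) := by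
    rw [← sum_card_layer S] at hS₁
    simpa using (sum_eq_sum_iff_of_le fun j _ => hr.le_card (layer S j)).1 hS₁
  refine ⟨layer S, fun j => ⟨fun x hx => hfstE (mem_image_of_mem _ (mem_layer.1 hx)), hlayer j⟩,
    fun x hx => ?_⟩
  rw [← himage] at hx
  obtain ⟨⟨x, j⟩, hxj, rfl⟩ := mem_image.1 hx
  exact ⟨j, mem_layer.2 hxj, fun i hi => congrArg Prod.snd (hinj (mem_layer.1 hi) hxj rfl)⟩

theorem exists_uniform_indep_cover (hr : IsRankFunction r) (E : Finset α)
    (p q : ℕ) (hE : ∀ X ⊆ E, #X * q ≤ p * r X) :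
    ∃ I : Fin p → Finset α, (∀ t, I t ⊆ E ∧ r (I t) = #(I t)) ∧
      ∀ e ∈ E, #{t | e ∈ I t} = q := by
  have hsplit : ∀ X ⊆ E ×ˢ (univ : Finset (Fin q)), #X ≤ p * r (X.image Prod.fst) := by
    intro X hX
    have hXE : X.image Prod.fst ⊆ E := fun x hx => by
      obtain ⟨y, hy, rfl⟩ := mem_image.1 hx
      exact (mem_product.1 (hX hy)).1
    calc #X ≤ #(X.image Prod.fst ×ˢ (univ : Finset (Fin q))) :=
          card_le_card fun y hy => mem_product.2 ⟨mem_image_of_mem _ hy, mem_univ _⟩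
      _ = #(X.image Prod.fst) * q := by simp
      _ ≤ p * r (X.image Prod.fst) := hE _ hXE
  obtain ⟨J, hJ, hpart⟩ := (hr.comp_image Prod.fst).exists_partition_indep _ p hsplit
  have hinj t := hr.injOn_of_comp_image_eq_card (hJ t).2
  refine ⟨fun t => (J t).image Prod.fst, fun t => ⟨fun x hx => ?_, (hinj t).2⟩, fun e he => ?_⟩
  · obtain ⟨y, hy, rfl⟩ := mem_image.1 hx
    exact (mem_product.1 ((hJ t).1 hy)).1
  choose g hg using fun i : Fin q => hpart (e, i) (mem_product.2 ⟨he, mem_univ i⟩)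
  have hg_inj : Function.Injective g := fun i i' h =>
    congrArg Prod.snd ((hinj (g i)).1 (hg i).1 (by rw [h]; exact (hg i').1) rfl :
      ((e, i) : α × Fin q) = (e, i'))
  have hfilter : ({t | e ∈ (J t).image Prod.fst} : Finset (Fin p)) = univ.image g := by
    ext t
    simp only [mem_filter, mem_univ, true_and, mem_image]
    constructor
    · rintro ⟨⟨x, i⟩, hi, rfl⟩
      exact ⟨i, ((hg i).2 t hi).symm⟩
    · rintro ⟨i, -, rfl⟩
      exact ⟨(e, i), (hg i).1, rfl⟩
  rw [hfilter, card_image_of_injective _ hg_inj, card_univ, Fintype.card_fin]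

end IsRankFunction

end RankFunction

theorem FinMatroid.isRankFunction {α : Type*} [DecidableEq α] (M : FinMatroid α) :
    IsRankFunction M.r :=
  ⟨M.r_empty, M.r_le_card, fun _ _ h => M.r_mono h, M.r_submod⟩

theorem FinMatroid.Loopless.one_le_r_s12 {α : Type*} [DecidableEq α] {M : FinMatroid α}
    (hM : M.Loopless) {X : Finset α} (hXE : X ⊆ M.E) (hX : X.Nonempty) : 1 ≤ M.r X := by
  obtain ⟨x, hx⟩ := hX
  exact (hM x (hXE hx)).symm.le.trans (M.r_mono (singleton_subset_iff.2 hx))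

theorem stmt12_general {α : Type*} [DecidableEq α] (M : FinMatroid α)
    (hloop : M.Loopless) (γ : ℝ)
    (hγ : IsGreatest
      {d : ℝ | ∃ X : Finset α, X ⊆ M.E ∧ X.Nonempty ∧
        d = (X.card : ℝ) / (M.r X : ℝ)} γ) :
    ∃ (m : ℕ) (I : Fin m → Finset α) (lam : Fin m → ℝ),
      (∀ t, I t ⊆ M.E ∧ M.r (I t) = (I t).card) ∧
      (∀ t, 0 ≤ lam t) ∧
      (∑ t, lam t = 1) ∧
      ∀ e ∈ M.E, ∑ t ∈ Finset.univ.filter (fun t => e ∈ I t), lam t = 1 / γ := by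
  obtain ⟨X, hXE, hX, rfl⟩ := hγ.1
  have hrX : (0 : ℝ) < M.r X := by exact_mod_cast hloop.one_le_r_s12 hXE hX
  have hcardX : (0 : ℝ) < #X := by exact_mod_cast hX.card_pos
  have hdense : ∀ Y ⊆ M.E, #Y * M.r X ≤ #X * M.r Y := by
    intro Y hYE
    obtain rfl | hY := Y.eq_empty_or_nonempty
    · simp
    have hrY : (0 : ℝ) < M.r Y := by exact_mod_cast hloop.one_le_r_s12 hYE hY
    exact_mod_cast (div_le_div_iff₀ hrY hrX).1 (hγ.2 ⟨Y, hYE, hY, rfl⟩)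
  obtain ⟨I, hI, hcount⟩ := M.isRankFunction.exists_uniform_indep_cover M.E #X (M.r X) hdense
  refine ⟨#X, I, fun _ => 1 / #X, hI, fun _ => by positivity, ?_, fun e he => ?_⟩
  · simp [hcardX.ne']
  · rw [sum_const, hcount e he, nsmul_eq_mul]
    field_simp

/-- For a loopless matroid with density `γ = max_{∅ ≠ X ⊆ E} |X|/r(X)`, the vector
with all coordinates `1/γ` is a convex combination of indicator vectors of
independent sets: there are independent sets `I_1, …, I_m` and nonnegative
coefficients summing to `1` such that every `e ∈ E` has total coefficient `1/γ`. -/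
theorem stmt12 {α : Type*} [DecidableEq α] (M : FinMatroid α)
    (hloop : M.Loopless) (hE : M.E.Nonempty) (γ : ℝ)
    (hγ : IsGreatest
      {d : ℝ | ∃ X : Finset α, X ⊆ M.E ∧ X.Nonempty ∧
        d = (X.card : ℝ) / (M.r X : ℝ)} γ) :
    ∃ (m : ℕ) (I : Fin m → Finset α) (lam : Fin m → ℝ),
      (∀ t, I t ⊆ M.E ∧ M.r (I t) = (I t).card) ∧
      (∀ t, 0 ≤ lam t) ∧
      (∑ t, lam t = 1) ∧
      ∀ e ∈ M.E, ∑ t ∈ Finset.univ.filter (fun t => e ∈ I t), lam t = 1 / γ :=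
  stmt12_general M hloop γ hγ
end

section
/- Let M be a loopless matroid on a nonempty finite ground set E with rank function r, and suppose every element e ∈ E is contained in some cocircuit of M of size at most c, where c ≥ 1 is an integer. Then the density of M is at most c; that is, |X| ≤ c · r(X) for every nonempty subset X ⊆ E. -/
/-- `C` is a cocircuit of `M`: a minimal dependent set of the dual matroid.
A set `X ⊆ E` is dependent in the dual iff `r(E \ X) < r(E)`. -/
def FinMatroid.IsCocircuit {α : Type*} [DecidableEq α] (M : FinMatroid α)
    (C : Finset α) : Prop :=
  C ⊆ M.E ∧ M.r (M.E \ C) < M.r M.E ∧ ∀ D ⊂ C, M.r (M.E \ D) = M.r M.E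

/-- Adding one element raises the rank by at most one. -/
lemma FinMatroid.r_insert_le {α : Type*} [DecidableEq α] (M : FinMatroid α)
    (A : Finset α) (e : α) : M.r (insert e A) ≤ M.r A + 1 := by
  have h := M.r_submod A {e}
  have h1 : M.r {e} ≤ 1 := by simpa using M.r_le_card {e}
  have : A ∪ {e} = insert e A := by ext x; simp [or_comm]
  rw [this] at h
  omega

/-- If `e` is spanned by `A` and `A ⊆ B`, `e ∉ B`, then `e` is spanned by `B`. -/
lemma FinMatroid.span_mono {α : Type*} [DecidableEq α] (M : FinMatroid α)
    {A B : Finset α} {e : α} (hAB : A ⊆ B) (heB : e ∉ B)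
    (h : M.r (insert e A) = M.r A) : M.r (insert e B) ≤ M.r B := by
  have hsub := M.r_submod (insert e A) B
  have hu : insert e A ∪ B = insert e B := by
    rw [Finset.insert_union, Finset.union_eq_right.mpr hAB]
  have hi : insert e A ∩ B = A := by
    ext x; simp only [Finset.mem_inter, Finset.mem_insert]
    constructor
    · rintro ⟨h1 | h1, h2⟩
      · subst h1; exact absurd h2 heB
      · exact h1
    · intro h1; exact ⟨Or.inr h1, hAB h1⟩
  rw [hu, hi, h] at hsub
  omega

/-- If every element of a loopless matroid lies in a cocircuit of size at most `c`,
then the density is at most `c`: `|X| ≤ c·r(X)` for every nonempty `X ⊆ E`. -/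
theorem stmt13 {α : Type*} [DecidableEq α] (M : FinMatroid α)
    (hloop : M.Loopless) (hE : M.E.Nonempty)
    (c : ℕ) (hc : 1 ≤ c)
    (hsmall : ∀ e ∈ M.E, ∃ C : Finset α, M.IsCocircuit C ∧ e ∈ C ∧ C.card ≤ c) :
    ∀ X ⊆ M.E, X.Nonempty → X.card ≤ c * M.r X := by
  intro X
  induction X using Finset.strongInduction with
  | _ X ih =>
    intro hXE hXne
    obtain ⟨e, heX⟩ := hXne
    have heE : e ∈ M.E := hXE heX
    obtain ⟨C, ⟨hCE, hCr, hCmin⟩, heC, hCc⟩ := hsmall e heE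
    -- rank of X is at least 1
    have hrX1 : 1 ≤ M.r X := by
      have := M.r_mono (Finset.singleton_subset_iff.mpr heX)
      rw [hloop e heE] at this; exact this
    -- the cardinality split
    have hcardsplit : X.card = (X \ C).card + (X ∩ C).card := by
      rw [Finset.card_sdiff_add_card_inter]
    have hXC : (X ∩ C).card ≤ c :=
      le_trans (Finset.card_le_card (Finset.inter_subset_right)) hCc
    by_cases hempty : X \ C = ∅
    · -- X ⊆ C, so |X| ≤ c ≤ c * r X
      have h0 : (X \ C).card = 0 := by rw [hempty]; simp
      have : X.card ≤ c := by omega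
      calc X.card ≤ c * 1 := by omega
        _ ≤ c * M.r X := by exact Nat.mul_le_mul_left c hrX1
    · -- main case: r (X \ C) + 1 ≤ r X
      have hAne : (X \ C).Nonempty := Finset.nonempty_of_ne_empty hempty
      have heA : e ∉ X \ C := by simp [heC]
      have heB : e ∉ M.E \ C := by simp [heC]
      have hAB : X \ C ⊆ M.E \ C := Finset.sdiff_subset_sdiff hXE (le_refl C)
      -- insert e (E \ C) = E \ (C.erase e)
      have hins : insert e (M.E \ C) = M.E \ (C.erase e) := by
        ext x
        simp only [Finset.mem_insert, Finset.mem_sdiff, Finset.mem_erase]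
        constructor
        · rintro (rfl | ⟨h1, h2⟩)
          · exact ⟨heE, fun h => absurd rfl h.1⟩
          · exact ⟨h1, fun h => h2 h.2⟩
        · rintro ⟨h1, h2⟩
          by_cases hx : x = e
          · exact Or.inl hx
          · exact Or.inr ⟨h1, fun hxc => h2 ⟨hx, hxc⟩⟩
      have herase : C.erase e ⊂ C := Finset.erase_ssubset heC
      have hBfull : M.r (insert e (M.E \ C)) = M.r M.E := by
        rw [hins]; exact hCmin _ herase
      -- e is not spanned by X \ C
      have hne : M.r (insert e (X \ C)) ≠ M.r (X \ C) := by
        intro h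
        have := M.span_mono hAB heB h
        rw [hBfull] at this
        omega
      have hle := M.r_insert_le (X \ C) e
      have hge := M.r_mono (Finset.subset_insert e (X \ C))
      have hkey : M.r (insert e (X \ C)) = M.r (X \ C) + 1 := by omega
      have hsubX : insert e (X \ C) ⊆ X := by
        intro x hx
        rcases Finset.mem_insert.mp hx with rfl | hx
        · exact heX
        · exact (Finset.mem_sdiff.mp hx).1
      have hrank : M.r (X \ C) + 1 ≤ M.r X := by
        have := M.r_mono hsubX
        omega
      -- induction hypothesis on X \ C
      have hss : X \ C ⊂ X := by
        refine Finset.ssubset_iff_of_subset (Finset.sdiff_subset) |>.mpr ⟨e, heX, heA⟩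
      have hih := ih (X \ C) hss (le_trans (Finset.sdiff_subset) hXE) hAne
      have : c * M.r (X \ C) + c ≤ c * M.r X := by
        calc c * M.r (X \ C) + c = c * (M.r (X \ C) + 1) := by ring
          _ ≤ c * M.r X := Nat.mul_le_mul_left c hrank
      omega
end
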